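/- arXiv:2204.05394 — 6 statements merged into one kernel-verified Lean document; each statement's English description precedes it below -/
import Mathlib

section
/- For x ∈ (0,π) and y ∈ (0, π/2], the series ∑_{m=1}^∞ (sin²(my)/m³)·sin(mx) converges to the piecewise function f(x) = (y(π−y)/2)x − (π/8)x² for x ∈ (0, 2y], and f(x) = (y²/2)(π−x) for x ∈ (2y, π). In particular this sum is strictly positive for all x ∈ (0,π) and y ∈ (0,π/2]. -/
open Real

lemma bern3 (u : ℝ) : (Polynomial.aeval u) (Polynomial.bernoulli 3)
    = u^3 - 3/2*u^2 + 1/2*u := by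
  simp [Polynomial.bernoulli, Finset.sum_range_succ, bernoulli_one, bernoulli_zero,
    bernoulli_eq_bernoulli'_of_ne_one, bernoulli'_two, bernoulli'_three]
  ring

lemma S3 (θ : ℝ) (h0 : 0 ≤ θ) (h1 : θ ≤ 2*π) :
    HasSum (fun n : ℕ => Real.sin ((n+1 : ℕ) * θ) / ((n+1 : ℕ) : ℝ)^3)
      (π^2*θ/6 - π*θ^2/4 + θ^3/12) := by
  have hπ := Real.pi_pos
  have hx : θ/(2*π) ∈ Set.Icc (0:ℝ) 1 := by
    constructor
    · positivity
    · rw [div_le_one (by positivity)]; exact h1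
  have H := hasSum_one_div_nat_pow_mul_sin (k := 1) one_ne_zero hx
  have H2 := (hasSum_nat_add_iff' (f := fun n : ℕ => 1 / (n : ℝ) ^ (2 * 1 + 1) * Real.sin (2 * π * n * (θ/(2*π)))) 1).mpr H
  simp only [Finset.range_one, Finset.sum_singleton, Nat.cast_zero] at H2
  norm_num [bern3, Nat.factorial] at H2
  have hfun : ∀ n : ℕ, ((((n:ℝ)+1))^3)⁻¹ * Real.sin (2*π*((n:ℝ)+1)*(θ/(2*π)))
      = Real.sin ((n+1:ℕ)*θ)/((n+1:ℕ):ℝ)^3 := by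
    intro n
    have h : 2*π*((n:ℝ)+1)*(θ/(2*π)) = ((n+1:ℕ):ℝ)*θ := by push_cast; field_simp
    rw [h]; push_cast; ring
  have hval : (2*π)^3/2/6 * ((θ/(2*π))^3 - 3/2*(θ/(2*π))^2 + 1/2*(θ/(2*π)))
      = π^2*θ/6 - π*θ^2/4 + θ^3/12 := by field_simp; ring
  rw [hval] at H2
  exact HasSum.congr_fun H2 fun n => (hfun n).symm

lemma trig_id (a b : ℝ) : Real.sin b ^ 2 * Real.sin a
    = (1/2) * Real.sin a - (1/4) * Real.sin (a + 2*b) - (1/4) * Real.sin (a - 2*b) := by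
  rw [Real.sin_add, Real.sin_sub, Real.cos_two_mul]
  linear_combination (Real.sin a) * (Real.sin_sq_add_cos_sq b)

/-- Fourier sine series ∑ sin²(my) sin(mx)/m³ equals the given
piecewise function on (0,π), and in particular is strictly positive. -/
theorem sine_series_piecewise (x y : ℝ) (hx : x ∈ Set.Ioo (0:ℝ) π)
    (hy : y ∈ Set.Ioc (0:ℝ) (π / 2)) :
    HasSum (fun m : ℕ =>
        Real.sin ((m + 1 : ℕ) * y) ^ 2 / ((m + 1 : ℕ) : ℝ) ^ 3 *
          Real.sin ((m + 1 : ℕ) * x))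
      (if x ≤ 2 * y then y * (π - y) / 2 * x - π / 8 * x ^ 2
       else y ^ 2 / 2 * (π - x)) ∧
    0 < ∑' m : ℕ,
        Real.sin ((m + 1 : ℕ) * y) ^ 2 / ((m + 1 : ℕ) : ℝ) ^ 3 *
          Real.sin ((m + 1 : ℕ) * x) := by
  obtain ⟨hx0, hxπ⟩ := hx
  obtain ⟨hy0, hyπ⟩ := hy
  have hπ := Real.pi_pos
  set P : ℝ → ℝ := fun θ => π^2*θ/6 - π*θ^2/4 + θ^3/12 with hP
  have h1 := S3 x hx0.le (by linarith)
  have h2 := S3 (x + 2*y) (by linarith) (by linarith)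
  -- third sum: for argument x - 2*y, with signed value
  have h3 : HasSum (fun n : ℕ => Real.sin ((n+1 : ℕ) * (x - 2*y)) / ((n+1 : ℕ) : ℝ)^3)
      (if x ≤ 2 * y then -(P (2*y - x)) else P (x - 2*y)) := by
    by_cases hc : x ≤ 2 * y
    · rw [if_pos hc]
      have h := (S3 (2*y - x) (by linarith) (by linarith)).neg
      refine HasSum.congr_fun h fun n => ?_
      have : ((n+1:ℕ):ℝ) * (x - 2*y) = -(((n+1:ℕ):ℝ) * (2*y - x)) := by ring
      rw [this, Real.sin_neg]; ring
    · rw [if_neg hc]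
      exact S3 (x - 2*y) (by linarith) (by linarith)
  have hsum := ((h1.mul_left (1/2)).sub (h2.mul_left (1/4))).sub (h3.mul_left (1/4))
  have hfun : ∀ n : ℕ, Real.sin ((n+1:ℕ)*y)^2 / ((n+1:ℕ):ℝ)^3 * Real.sin ((n+1:ℕ)*x)
      = (1/2) * (Real.sin ((n+1:ℕ)*x)/((n+1:ℕ):ℝ)^3)
        - (1/4) * (Real.sin ((n+1:ℕ)*(x+2*y))/((n+1:ℕ):ℝ)^3)
        - (1/4) * (Real.sin ((n+1:ℕ)*(x-2*y))/((n+1:ℕ):ℝ)^3) := by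
    intro n
    have e1 : ((n+1:ℕ):ℝ)*(x+2*y) = ((n+1:ℕ):ℝ)*x + 2*(((n+1:ℕ):ℝ)*y) := by ring
    have e2 : ((n+1:ℕ):ℝ)*(x-2*y) = ((n+1:ℕ):ℝ)*x - 2*(((n+1:ℕ):ℝ)*y) := by ring
    rw [e1, e2]
    have h := trig_id (((n+1:ℕ):ℝ)*x) (((n+1:ℕ):ℝ)*y)
    have hn : (((n+1:ℕ):ℝ)^3) ≠ 0 := by positivity
    linear_combination h / (((n+1:ℕ):ℝ)^3)
  have hval : (1/2) * P x - (1/4) * P (x + 2*y)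
        - (1/4) * (if x ≤ 2 * y then -(P (2*y - x)) else P (x - 2*y))
      = (if x ≤ 2 * y then y * (π - y) / 2 * x - π / 8 * x ^ 2
          else y ^ 2 / 2 * (π - x)) := by
    by_cases hc : x ≤ 2 * y <;> simp only [if_pos, if_neg, hc, if_true, if_false] <;>
      simp only [hP] <;> ring
  have hmain : HasSum (fun m : ℕ =>
        Real.sin ((m + 1 : ℕ) * y) ^ 2 / ((m + 1 : ℕ) : ℝ) ^ 3 *
          Real.sin ((m + 1 : ℕ) * x))
      (if x ≤ 2 * y then y * (π - y) / 2 * x - π / 8 * x ^ 2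
       else y ^ 2 / 2 * (π - x)) := by
    rw [← hval]
    exact HasSum.congr_fun hsum hfun
  refine ⟨hmain, ?_⟩
  rw [hmain.tsum_eq]
  by_cases hc : x ≤ 2 * y
  · rw [if_pos hc]
    nlinarith [mul_pos hx0 (mul_pos hy0 (sub_pos.2 hxπ)),
      mul_nonneg hx0.le (mul_nonneg (by linarith : (0:ℝ) ≤ 2*y - x) (by linarith : (0:ℝ) ≤ π - 2*y)),
      mul_nonneg hx0.le (by linarith : (0:ℝ) ≤ 2*y - x), mul_pos hx0 hy0]
  · rw [if_neg hc]
    have : 0 < π - x := by linarith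
    positivity
end

section
/- Let ω ∈ (0,1/2], δ ∈ (0,π], and F(N;δ,ω) = (δ²/6)∑_{m=1}^∞ [mNδ/(mNδ − sin(mNδ))](sin(mπω)/m)². Then the partial derivative ∂F/∂N is strictly positive at N = 2kπ/δ and strictly negative at N = (2k+1)π/δ for every positive integer k; in fact at N = (2k+1)π/δ, ∂F/∂N = −(δ²/(6N))·(πω)²/2. -/
/-!
Write `q x = x / (x - sin x)` and `aₘ = (sin (m π ω) / m)²`, so that `F N = δ²/6 ∑ q (m N δ) aₘ`.
For `x ≥ 2` both `q x` and `x q' x` are bounded, so the series can be differentiated termwise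
for `N > 2/δ`. Since `q' (n π) = (-1)ⁿ / (n π)`, at `N = n π / δ` the `m`-th term of `F'` is
`δ³/(6 n π) ((-1)ⁿ)ᵐ aₘ`: for even `n` the derivative is a positive multiple of `∑ aₘ > 0`, for
odd `n` it involves `∑ (-1)ᵐ aₘ = -(π ω)²/2`, which comes from the Fourier series of the Bernoulli
polynomial `B₂`.
-/

open Real

noncomputable def divSubSin (x : ℝ) : ℝ := x / (x - sin x)

noncomputable def divSubSinDeriv (x : ℝ) : ℝ := (x * cos x - sin x) / (x - sin x) ^ 2

theorem hasDerivAt_divSubSin {x : ℝ} (hx : x - sin x ≠ 0) :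
    HasDerivAt divSubSin (divSubSinDeriv x) x := by
  have h := (hasDerivAt_id' x).div ((hasDerivAt_id' x).sub (hasDerivAt_sin x)) hx
  refine h.congr_deriv ?_
  simp only [divSubSinDeriv, Pi.sub_apply]
  ring

theorem half_le_sub_sin {x : ℝ} (hx : 2 ≤ x) : x / 2 ≤ x - sin x := by
  linarith [sin_le_one x]

theorem abs_divSubSin_le_two {x : ℝ} (hx : 2 ≤ x) : |divSubSin x| ≤ 2 := by
  have h := half_le_sub_sin hx
  rw [divSubSin, abs_div, abs_of_pos (by linarith), abs_of_pos (by linarith), div_le_iff₀ (by linarith)]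
  linarith

theorem abs_divSubSinDeriv_le {x : ℝ} (hx : 2 ≤ x) : |divSubSinDeriv x| ≤ 8 / x := by
  have hden := half_le_sub_sin hx
  have hnum : |x * cos x - sin x| ≤ 2 * x := by
    calc |x * cos x - sin x| ≤ |x| * |cos x| + |sin x| := by
          rw [← abs_mul]; exact abs_sub _ _
      _ ≤ x * 1 + 1 := by
          rw [abs_of_nonneg (by linarith)]
          gcongr
          exacts [abs_cos_le_one x, abs_sin_le_one x]
      _ ≤ 2 * x := by linarith
  rw [divSubSinDeriv, abs_div, abs_of_nonneg (sq_nonneg (x - sin x))]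
  calc |x * cos x - sin x| / (x - sin x) ^ 2 ≤ 2 * x / (x / 2) ^ 2 := by
        gcongr
    _ = 8 / x := by field_simp; ring

theorem divSubSinDeriv_nat_mul_pi {n : ℕ} (hn : n ≠ 0) :
    divSubSinDeriv (n * π) = (-1) ^ n / (n * π) := by
  have : (n : ℝ) * π ≠ 0 := by positivity
  rw [divSubSinDeriv, cos_nat_mul_pi, sin_nat_mul_pi]
  field_simp
  ring

theorem hasDerivAt_tsum_divSubSin {a : ℕ → ℝ} (ha : Summable a) {δ N : ℝ} (hδ : 0 < δ)
    (hN : 2 / δ < N) :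
    HasDerivAt (fun N => ∑' m : ℕ, divSubSin ((m + 1 : ℕ) * N * δ) * a m)
      (∑' m : ℕ, (m + 1 : ℕ) * δ * divSubSinDeriv ((m + 1 : ℕ) * N * δ) * a m) N := by
  have two_le : ∀ (m : ℕ) {y : ℝ}, 2 / δ < y → 2 ≤ (m + 1 : ℕ) * y * δ := fun m y hy => by
    have h1 : (1 : ℝ) ≤ (m + 1 : ℕ) := by simp
    have h2 : 2 < y * δ := (div_lt_iff₀ hδ).mp hy
    nlinarith
  refine hasDerivAt_tsum_of_isPreconnected
    (g := fun m N => divSubSin ((m + 1 : ℕ) * N * δ) * a m)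
    (g' := fun m N => (m + 1 : ℕ) * δ * divSubSinDeriv ((m + 1 : ℕ) * N * δ) * a m)
    (ha.abs.mul_left (4 * δ)) isOpen_Ioi isPreconnected_Ioi
    (fun m y hy => ?_) (fun m y hy => ?_) (Set.mem_Ioi.mpr hN) ?_ (Set.mem_Ioi.mpr hN)
  · have hx := two_le m hy
    have hd := (hasDerivAt_divSubSin (by linarith [half_le_sub_sin hx])).comp y
      (((hasDerivAt_id' y).const_mul ((m + 1 : ℕ) : ℝ)).mul_const δ)
    exact (hd.mul_const (a m)).congr_deriv (by ring)
  · have hx := two_le m hy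
    have hy0 : 0 < y := lt_trans (by positivity) hy
    have h8 : 8 / y ≤ 4 * δ := by
      rw [div_le_iff₀ hy0]; have := (div_lt_iff₀ hδ).mp hy; linarith
    rw [norm_mul, norm_mul, Real.norm_eq_abs, Real.norm_eq_abs, Real.norm_eq_abs,
      abs_of_pos (by positivity)]
    calc (m + 1 : ℕ) * δ * |divSubSinDeriv ((m + 1 : ℕ) * y * δ)| * |a m|
        ≤ (m + 1 : ℕ) * δ * (8 / ((m + 1 : ℕ) * y * δ)) * |a m| := by
          gcongr; exact abs_divSubSinDeriv_le hx
      _ = 8 / y * |a m| := by field_simp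
      _ ≤ 4 * δ * |a m| := by gcongr
  · refine .of_norm_bounded (ha.abs.mul_left 2) fun m => ?_
    rw [norm_mul, Real.norm_eq_abs, Real.norm_eq_abs]
    gcongr
    exact abs_divSubSin_le_two (two_le m hN)

theorem hasDerivAt_tsum_divSubSin_nat_mul_pi {a : ℕ → ℝ} (ha : Summable a) {δ : ℝ} (hδ : 0 < δ)
    {n : ℕ} (hn : n ≠ 0) :
    HasDerivAt (fun N => ∑' m : ℕ, divSubSin ((m + 1 : ℕ) * N * δ) * a m)
      (δ / (n * π) * ∑' m : ℕ, ((-1) ^ n) ^ (m + 1) * a m) (n * π / δ) := by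
  have hnπ : 2 / δ < n * π / δ := by
    have : (1 : ℝ) ≤ n := by exact_mod_cast Nat.one_le_iff_ne_zero.mpr hn
    gcongr
    nlinarith [pi_gt_three]
  convert hasDerivAt_tsum_divSubSin ha hδ hnπ using 1
  rw [← tsum_mul_left]
  congr 1 with m
  have hx : ((m + 1 : ℕ) : ℝ) * (n * π / δ) * δ = ((m + 1) * n : ℕ) * π := by
    push_cast; field_simp
  rw [hx, divSubSinDeriv_nat_mul_pi (by positivity), pow_mul']
  push_cast
  field_simp

theorem hasSum_one_div_sq_mul_cos {t : ℝ} (ht : t ∈ Set.Icc (0 : ℝ) 1) :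
    HasSum (fun n : ℕ => 1 / (n : ℝ) ^ 2 * cos (2 * π * n * t)) (π ^ 2 * (t ^ 2 - t + 6⁻¹)) := by
  have h := hasSum_one_div_nat_pow_mul_cos one_ne_zero ht
  rw [mul_one, ← bernoulliFun, bernoulliFun_two] at h
  convert h using 1
  rw [Nat.factorial_two, Nat.cast_ofNat]
  ring

-- `x ↦ sin² (n x)` is `π`-periodic, so `|x| ≤ π / 2` is the full range of validity.
theorem hasSum_neg_one_pow_mul_sin_mul_div_sq {x : ℝ} (hx : |x| ≤ π / 2) :
    HasSum (fun n : ℕ => (-1) ^ n * (sin (n * x) / n) ^ 2) (-x ^ 2 / 2) := by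
  obtain ⟨hlo, hhi⟩ := abs_le.mp hx
  have hπ := pi_pos
  have half := hasSum_one_div_sq_mul_cos (t := 1 / 2) (by norm_num)
  have shifted := hasSum_one_div_sq_mul_cos (t := x / π + 1 / 2) <| by
    constructor
    · have : -(1 / 2) ≤ x / π := by rw [le_div_iff₀ hπ]; linarith
      linarith
    · have : x / π ≤ 1 / 2 := by rw [div_le_iff₀ hπ]; linarith
      linarith
  have hsum : HasSum (fun n : ℕ => (-1) ^ n * (sin (n * x) / n) ^ 2)
      ((π ^ 2 * ((1 / 2) ^ 2 - 1 / 2 + 6⁻¹)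
        - π ^ 2 * ((x / π + 1 / 2) ^ 2 - (x / π + 1 / 2) + 6⁻¹)) / 2) := by
    refine ((half.sub shifted).div_const 2).congr_fun fun n => ?_
    -- `(-1)ⁿ sin² (n x) = (cos (n π) - cos (2 n x + n π)) / 2`
    have h1 : 2 * π * n * (1 / 2) = n * π := by ring
    have h2 : 2 * π * n * (x / π + 1 / 2) = 2 * (n * x) + n * π := by field_simp
    rw [h1, h2, cos_add, cos_nat_mul_pi, sin_nat_mul_pi, cos_two_mul, cos_sq']
    ring
  convert hsum using 1
  field_simp
  ring

theorem hasSum_neg_one_pow_succ_mul_sin_mul_pi_div_sq {ω : ℝ} (hω : |ω| ≤ 1 / 2) :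
    HasSum (fun m : ℕ => (-1) ^ (m + 1) * (sin ((m + 1 : ℕ) * π * ω) / (m + 1 : ℕ)) ^ 2)
      (-(π * ω) ^ 2 / 2) := by
  have h := hasSum_neg_one_pow_mul_sin_mul_div_sq (x := π * ω) <| by
    rw [abs_mul, abs_of_pos pi_pos]; nlinarith [pi_pos]
  simpa [mul_assoc] using (hasSum_nat_add_iff' 1).mpr h

/-- For the constant-kernel series
F(N) = (δ²/6)∑_{m≥1} [mNδ/(mNδ − sin(mNδ))](sin(mπω)/m)², with N a continuous
variable, ∂F/∂N > 0 at N = 2kπ/δ and ∂F/∂N = −(δ²/(6N))(πω)²/2 < 0 at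
N = (2k+1)π/δ, for every positive integer k. -/
theorem F_deriv_signs (δ ω : ℝ) (hδ : δ ∈ Set.Ioc (0:ℝ) π)
    (hω : ω ∈ Set.Ioc (0:ℝ) (1/2))
    (F : ℝ → ℝ)
    (hF : ∀ N : ℝ, F N = δ ^ 2 / 6 * ∑' m : ℕ,
        ((m + 1 : ℕ) * N * δ / ((m + 1 : ℕ) * N * δ - Real.sin ((m + 1 : ℕ) * N * δ))) *
          (Real.sin ((m + 1 : ℕ) * π * ω) / (m + 1 : ℕ)) ^ 2)
    (k : ℕ) (hk : 0 < k) :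
    0 < deriv F (2 * k * π / δ) ∧
    deriv F ((2 * k + 1) * π / δ) =
      -(δ ^ 2 / (6 * ((2 * k + 1) * π / δ))) * (π * ω) ^ 2 / 2 ∧
    deriv F ((2 * k + 1) * π / δ) < 0 := by
  obtain ⟨hδ, -⟩ := hδ
  obtain ⟨hω₀, hω₁⟩ := hω
  set a : ℕ → ℝ := fun m => (sin ((m + 1 : ℕ) * π * ω) / (m + 1 : ℕ)) ^ 2 with ha_def
  have halt : HasSum (fun m => (-1) ^ (m + 1) * a m) (-(π * ω) ^ 2 / 2) :=
    hasSum_neg_one_pow_succ_mul_sin_mul_pi_div_sq (abs_le.mpr ⟨by linarith, hω₁⟩)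
  -- summability over `ℝ` is absolute
  have ha : Summable a := by
    simpa [abs_mul, ha_def] using halt.summable.abs
  have hderiv : ∀ n : ℕ, n ≠ 0 → deriv F (n * π / δ) =
      δ ^ 2 / 6 * (δ / (n * π) * ∑' m : ℕ, ((-1) ^ n) ^ (m + 1) * a m) := fun n hn => by
    rw [show F = _ from funext hF]
    exact ((hasDerivAt_tsum_divSubSin_nat_mul_pi ha hδ hn).const_mul _).deriv
  have hodd : deriv F ((2 * k + 1) * π / δ) =
      -(δ ^ 2 / (6 * ((2 * k + 1) * π / δ))) * (π * ω) ^ 2 / 2 := by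
    have h := hderiv (2 * k + 1) (by omega)
    push_cast at h
    rw [h, (odd_two_mul_add_one k).neg_one_pow, halt.tsum_eq]
    field_simp
  refine ⟨?_, hodd, ?_⟩
  · have h := hderiv (2 * k) (by omega)
    push_cast at h
    rw [h, (even_two_mul k).neg_one_pow]
    have ha0 : 0 < a 0 := by
      have : 0 < sin (π * ω) := sin_pos_of_pos_of_lt_pi (by positivity) (by nlinarith [pi_pos])
      simpa [ha_def] using pow_pos this 2
    have hsum_pos := ha.tsum_pos (fun m => sq_nonneg _) 0 ha0
    simp only [one_pow, one_mul]
    positivity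
  · rw [hodd]
    have : 0 < δ ^ 2 / (6 * ((2 * k + 1) * π / δ)) * (π * ω) ^ 2 / 2 := by positivity
    linarith
end

section
/- Let ω ∈ (0,1/2], δ ∈ (0,π], and define F(N;δ,ω) = (δ²/6)∑_{m=1}^∞ [mNδ/(mNδ − sin(mNδ))](sin(mπω)/m)² and F^∞ = (δ²/6)∑_{m=1}^∞ (sin(mπω)/m)². For x = Nδ ∈ (0,π), F(N;δ,ω) − F^∞ = (δ²/6)∑_{m=1}^∞ [sin(mx)/(mx − sin(mx))](sin(mπω)/m)² > 0. -/
/-!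
Write `x = Nδ`, `y = πω`. Since `t / (t - sin t) = 1 + sin t / (t - sin t)`, the identity just splits
the series. For positivity, `sin t / (t - sin t) - sin t / t = sin² t / (t (t - sin t)) ≥ 0`, so the
series dominates `x⁻¹ ∑ sin (m x) sin² (m y) / m³`. By product-to-sum this equals
`S x / 2 - (S (x + 2y) + S (x - 2y)) / 4`, where `S t = ∑ sin (m t) / m³` is the odd cubic
`t (π - |t|) (2π - |t|) / 12` on `[-2π, 2π]` (a Bernoulli polynomial). For `2y ≤ x` the value is
`y² (π - x) / 2`, a second difference of the cubic; for `x < 2y` it is `x (4πy - 4y² - πx) / 8`.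
Both are positive for `x < π`, `y ≤ π / 2`.
-/

open Real

/-- Closed form of `∑ sin (n t) / n³`, valid for `|t| ≤ 2π`. -/
noncomputable def sinCubeSum (t : ℝ) : ℝ := t * (π - |t|) * (2 * π - |t|) / 12

lemma bernoulli_three_eval (r : ℝ) :
    (Polynomial.map (algebraMap ℚ ℝ) (Polynomial.bernoulli 3)).eval r =
      r ^ 3 - 3 / 2 * r ^ 2 + 1 / 2 * r := by
  simp_rw [Polynomial.bernoulli, Finset.sum_range_succ, Finset.sum_range_zero,
    Polynomial.map_add, Polynomial.map_zero, Polynomial.map_monomial,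
    Polynomial.eval_add, Polynomial.eval_zero, Polynomial.eval_monomial]
  rw [bernoulli_one, bernoulli_eq_bernoulli'_of_ne_one zero_ne_one, bernoulli'_zero,
    bernoulli_eq_bernoulli'_of_ne_one (by decide : (2:ℕ) ≠ 1), bernoulli'_two,
    bernoulli_eq_bernoulli'_of_ne_one (by decide : (3:ℕ) ≠ 1), bernoulli'_three]
  norm_num [Nat.choose]
  ring

lemma hasSum_sin_nat_mul_div_pow_three_of_nonneg {t : ℝ} (h0 : 0 ≤ t) (h2 : t ≤ 2 * π) :
    HasSum (fun n : ℕ => sin (n * t) / (n : ℝ) ^ 3) (t * (π - t) * (2 * π - t) / 12) := by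
  have hmem : t / (2 * π) ∈ Set.Icc (0 : ℝ) 1 :=
    ⟨by positivity, (div_le_one (by positivity)).2 h2⟩
  convert hasSum_one_div_nat_pow_mul_sin one_ne_zero hmem using 1
  · funext n
    rw [show 2 * π * n * (t / (2 * π)) = n * t by field_simp]
    ring
  · rw [show 2 * 1 + 1 = 3 from rfl, bernoulli_three_eval]
    simp only [Nat.factorial]
    field_simp
    ring

lemma hasSum_sin_nat_mul_div_pow_three {t : ℝ} (ht : |t| ≤ 2 * π) :
    HasSum (fun n : ℕ => sin (n * t) / (n : ℝ) ^ 3) (sinCubeSum t) := by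
  rcases le_total 0 t with h0 | h0
  · rw [sinCubeSum, abs_of_nonneg h0] at *
    exact hasSum_sin_nat_mul_div_pow_three_of_nonneg h0 ht
  · rw [sinCubeSum, abs_of_nonpos h0] at *
    rw [show t * (π - -t) * (2 * π - -t) / 12 = -(-t * (π - -t) * (2 * π - -t) / 12) by ring]
    refine (hasSum_sin_nat_mul_div_pow_three_of_nonneg (neg_nonneg.2 h0) ht).neg.congr_fun
      fun n => ?_
    rw [mul_neg, sin_neg, neg_div, neg_neg]

lemma sinCubeSum_sub_add_sinCubeSum_add_lt {x h : ℝ} (hx0 : 0 < x) (hxπ : x < π) (h0 : 0 < h)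
    (hhπ : h ≤ π) : sinCubeSum (x - h) + sinCubeSum (x + h) < 2 * sinCubeSum x := by
  simp only [sinCubeSum, abs_of_pos hx0, abs_of_pos (add_pos hx0 h0)]
  rcases le_total h x with hle | hle
  · rw [abs_of_nonneg (sub_nonneg.2 hle)]
    nlinarith [mul_pos (mul_pos h0 h0) (sub_pos.2 hxπ)]
  · rw [abs_of_nonpos (sub_nonpos.2 hle)]
    nlinarith [mul_pos hx0 (mul_pos pi_pos h0),
      mul_nonneg hx0.le (mul_nonneg h0.le (sub_nonneg.2 hhπ)),
      mul_nonneg hx0.le (mul_nonneg pi_pos.le (sub_nonneg.2 hle))]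

lemma sin_mul_sin_sq (a b : ℝ) :
    sin a * sin b ^ 2 = sin a / 2 - (sin (a + 2 * b) + sin (a - 2 * b)) / 4 := by
  rw [sin_add, sin_sub, cos_two_mul, cos_sq']
  ring

lemma hasSum_sin_nat_mul_mul_sin_sq_div_pow_three {x y : ℝ} (hx : |x| ≤ 2 * π)
    (hp : |x + 2 * y| ≤ 2 * π) (hm : |x - 2 * y| ≤ 2 * π) :
    HasSum (fun n : ℕ => sin (n * x) * sin (n * y) ^ 2 / (n : ℝ) ^ 3)
      (sinCubeSum x / 2 - (sinCubeSum (x + 2 * y) + sinCubeSum (x - 2 * y)) / 4) := by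
  refine (((hasSum_sin_nat_mul_div_pow_three hx).div_const 2).sub
    (((hasSum_sin_nat_mul_div_pow_three hp).add
      (hasSum_sin_nat_mul_div_pow_three hm)).div_const 4)).congr_fun fun n => ?_
  rw [sin_mul_sin_sq, mul_add, mul_sub, mul_left_comm _ 2]
  ring

lemma tsum_sin_div_mul_sin_div_sq_pos {x y : ℝ} (hx0 : 0 < x) (hxπ : x < π) (hy0 : 0 < y)
    (hy : y ≤ π / 2) :
    0 < ∑' n : ℕ, sin ((n + 1 : ℕ) * x) / ((n + 1 : ℕ) * x) *
      (sin ((n + 1 : ℕ) * y) / (n + 1 : ℕ)) ^ 2 := by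
  have hS := hasSum_sin_nat_mul_mul_sin_sq_div_pow_three (x := x) (y := y)
    (abs_le.2 ⟨by linarith, by linarith⟩) (abs_le.2 ⟨by linarith, by linarith⟩)
    (abs_le.2 ⟨by linarith, by linarith⟩)
  have hmid :=
    sinCubeSum_sub_add_sinCubeSum_add_lt hx0 hxπ (by positivity : 0 < 2 * y) (by linarith)
  have hshift := ((hasSum_nat_add_iff' 1).2 hS).div_const x
  rw [Finset.sum_range_one, Nat.cast_zero, zero_mul, sin_zero, zero_mul, zero_div, sub_zero]
    at hshift
  refine (div_pos (by linarith) hx0).trans_eq (hshift.tsum_eq.symm.trans (tsum_congr fun n => ?_))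
  field_simp

lemma sub_sin_le_sub_sin {a b : ℝ} (h : a ≤ b) : a - sin a ≤ b - sin b := by
  have := (abs_le.1 (abs_sin_sub_sin_le b a)).2
  rw [abs_of_nonneg (sub_nonneg.2 h)] at this
  linarith

lemma sin_div_le_sin_div_sub_sin (t : ℝ) : sin t / t ≤ sin t / (t - sin t) := by
  rcases eq_or_ne t 0 with rfl | ht
  · simp
  have hpos : 0 < t * (t - sin t) := by
    rcases ht.lt_or_gt with ht | ht
    · have := sin_lt (neg_pos.2 ht)
      rw [sin_neg] at this
      nlinarith
    · nlinarith [sin_lt ht]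
  have hsub : t - sin t ≠ 0 := right_ne_zero_of_mul hpos.ne'
  have hdiff : sin t / (t - sin t) - sin t / t = sin t ^ 2 / (t * (t - sin t)) := by
    field_simp
    ring
  linarith [div_nonneg (sq_nonneg (sin t)) hpos.le]

section Weighted

variable {x : ℝ} {t w : ℕ → ℝ}

lemma summable_sin_div_mul {s d : ℕ → ℝ} {c : ℝ} (hc : 0 < c) (hd : ∀ n, c ≤ d n)
    (hw : Summable w) (hw0 : ∀ n, 0 ≤ w n) : Summable fun n => sin (s n) / d n * w n := by
  refine (hw.mul_left (1 / c)).of_norm_bounded fun n => ?_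
  have hdn := hc.trans_le (hd n)
  rw [norm_mul, norm_div, Real.norm_of_nonneg (hw0 n), Real.norm_of_nonneg hdn.le]
  refine mul_le_mul_of_nonneg_right ?_ (hw0 n)
  calc ‖sin (s n)‖ / d n ≤ 1 / d n := div_le_div_of_nonneg_right (abs_sin_le_one _) hdn.le
    _ ≤ 1 / c := one_div_le_one_div_of_le hc (hd n)

lemma summable_sin_div_sub_sin_mul (hx : 0 < x) (ht : ∀ n, x ≤ t n) (hw : Summable w)
    (hw0 : ∀ n, 0 ≤ w n) : Summable fun n => sin (t n) / (t n - sin (t n)) * w n :=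
  summable_sin_div_mul (sub_pos.2 (sin_lt hx)) (fun n => sub_sin_le_sub_sin (ht n)) hw hw0

lemma tsum_div_sub_sin_mul_sub_tsum (hx : 0 < x) (ht : ∀ n, x ≤ t n) (hw : Summable w)
    (hw0 : ∀ n, 0 ≤ w n) :
    ∑' n, t n / (t n - sin (t n)) * w n - ∑' n, w n =
      ∑' n, sin (t n) / (t n - sin (t n)) * w n := by
  rw [sub_eq_iff_eq_add', ← hw.tsum_add (summable_sin_div_sub_sin_mul hx ht hw hw0)]
  refine tsum_congr fun n => ?_
  have hpos : 0 < t n - sin (t n) :=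
    (sub_pos.2 (sin_lt hx)).trans_le (sub_sin_le_sub_sin (ht n))
  field_simp
  ring

lemma tsum_sin_div_mul_le (hx : 0 < x) (ht : ∀ n, x ≤ t n) (hw : Summable w)
    (hw0 : ∀ n, 0 ≤ w n) :
    ∑' n, sin (t n) / t n * w n ≤ ∑' n, sin (t n) / (t n - sin (t n)) * w n :=
  Summable.tsum_le_tsum (fun n => mul_le_mul_of_nonneg_right (sin_div_le_sin_div_sub_sin _) (hw0 n))
    (summable_sin_div_mul hx ht hw hw0) (summable_sin_div_sub_sin_mul hx ht hw hw0)

end Weighted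

lemma summable_sin_nat_mul_div_sq (y : ℝ) : Summable fun n : ℕ => (sin (n * y) / n) ^ 2 := by
  refine (Real.summable_one_div_nat_pow.2 one_lt_two).of_nonneg_of_le (fun n => sq_nonneg _)
    fun n => ?_
  rw [div_pow]
  gcongr
  exact sin_sq_le_one _

theorem F_minus_Finfty_pos_first_interval_general (δ ω N : ℝ)
    (hω : ω ∈ Set.Ioc (0:ℝ) (1/2))
    (hx : N * δ ∈ Set.Ioo (0:ℝ) π) :
    (δ ^ 2 / 6 * ∑' m : ℕ,
        ((m + 1 : ℕ) * N * δ / ((m + 1 : ℕ) * N * δ - Real.sin ((m + 1 : ℕ) * N * δ))) *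
          (Real.sin ((m + 1 : ℕ) * π * ω) / (m + 1 : ℕ)) ^ 2) -
      (δ ^ 2 / 6 * ∑' m : ℕ,
        (Real.sin ((m + 1 : ℕ) * π * ω) / (m + 1 : ℕ)) ^ 2) =
      δ ^ 2 / 6 * ∑' m : ℕ,
        (Real.sin ((m + 1 : ℕ) * N * δ) /
            ((m + 1 : ℕ) * N * δ - Real.sin ((m + 1 : ℕ) * N * δ))) *
          (Real.sin ((m + 1 : ℕ) * π * ω) / (m + 1 : ℕ)) ^ 2 ∧
    0 < δ ^ 2 / 6 * ∑' m : ℕ,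
        (Real.sin ((m + 1 : ℕ) * N * δ) /
            ((m + 1 : ℕ) * N * δ - Real.sin ((m + 1 : ℕ) * N * δ))) *
          (Real.sin ((m + 1 : ℕ) * π * ω) / (m + 1 : ℕ)) ^ 2 := by
  obtain ⟨hω0, hω⟩ := hω
  obtain ⟨hx0, hxπ⟩ := hx
  have hδ : δ ≠ 0 := right_ne_zero_of_mul hx0.ne'
  simp only [mul_assoc]
  set x := N * δ
  set y := π * ω
  have hy0 : 0 < y := mul_pos pi_pos hω0
  have hy : y ≤ π / 2 := by linarith [mul_le_mul_of_nonneg_left hω pi_pos.le]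
  have ht (n : ℕ) : x ≤ (n + 1 : ℕ) * x :=
    le_mul_of_one_le_left hx0.le (by exact_mod_cast Nat.succ_pos n)
  have hw := (summable_nat_add_iff 1).2 (summable_sin_nat_mul_div_sq y)
  have hw0 (n : ℕ) : 0 ≤ (sin ((n + 1 : ℕ) * y) / (n + 1 : ℕ)) ^ 2 := sq_nonneg _
  refine ⟨by rw [← mul_sub, tsum_div_sub_sin_mul_sub_tsum hx0 ht hw hw0],
    mul_pos (by positivity) ?_⟩
  exact (tsum_sin_div_mul_sin_div_sq_pos hx0 hxπ hy0 hy).trans_le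
    (tsum_sin_div_mul_le hx0 ht hw hw0)

/-- For x = Nδ ∈ (0,π),
F(N;δ,ω) − F^∞ = (δ²/6)∑_{m≥1} [sin(mx)/(mx − sin(mx))](sin(mπω)/m)² > 0. -/
theorem F_minus_Finfty_pos_first_interval (δ ω N : ℝ)
    (hδ : δ ∈ Set.Ioc (0:ℝ) π) (hω : ω ∈ Set.Ioc (0:ℝ) (1/2))
    (hx : N * δ ∈ Set.Ioo (0:ℝ) π) :
    (δ ^ 2 / 6 * ∑' m : ℕ,
        ((m + 1 : ℕ) * N * δ / ((m + 1 : ℕ) * N * δ - Real.sin ((m + 1 : ℕ) * N * δ))) *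
          (Real.sin ((m + 1 : ℕ) * π * ω) / (m + 1 : ℕ)) ^ 2) -
      (δ ^ 2 / 6 * ∑' m : ℕ,
        (Real.sin ((m + 1 : ℕ) * π * ω) / (m + 1 : ℕ)) ^ 2) =
      δ ^ 2 / 6 * ∑' m : ℕ,
        (Real.sin ((m + 1 : ℕ) * N * δ) /
            ((m + 1 : ℕ) * N * δ - Real.sin ((m + 1 : ℕ) * N * δ))) *
          (Real.sin ((m + 1 : ℕ) * π * ω) / (m + 1 : ℕ)) ^ 2 ∧
    0 < δ ^ 2 / 6 * ∑' m : ℕ,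
        (Real.sin ((m + 1 : ℕ) * N * δ) /
            ((m + 1 : ℕ) * N * δ - Real.sin ((m + 1 : ℕ) * N * δ))) *
          (Real.sin ((m + 1 : ℕ) * π * ω) / (m + 1 : ℕ)) ^ 2 :=
  F_minus_Finfty_pos_first_interval_general δ ω N hω hx
end

section
/- For α ∈ (2,3), define K'(x) = ∫₀¹ sin(xξ)/ξ^{α−1} dξ for x > 0. Then K'(x) ≥ sin(x) and K'(x) ≥ (1−cos x)/x for all x > 0. Specifically: for x ≤ 2π/3, K'(x) ≥ sin x ≥ (1−cos x)/x since sin(xξ)/ξ^{α−1} is decreasing in ξ on (0,1]; and for x > 2π/3, K'(x) = x^{α−2}∫₀^x sin(t)/t^{α−1} dt > (2π/3)^{α−2} Si(2π) ≥ max{1, 3/π} ≥ max{sin x, (1−cos x)/x}. -/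
/-!
Differentiating `ξ ^ (1 - α) * (1 - cos (x * ξ))`, whose value at `0⁺` vanishes because `α < 3`,
and integrating over `[0, 1]` gives
`x K'(x) = 1 - cos x + (α - 1) ∫₀¹ s ^ (-α) (1 - cos (x s)) ds`
with a nonnegative last integral; this is the bound by `(1 - cos x) / x`.
For `x ≤ π`, concavity of `sin` gives `sin (x ξ) ξ ^ (1 - α) ≥ sin x · ξ ^ (2 - α) ≥ sin x`
pointwise.
For `x > π`, the bound `1 - cos t ≥ t² / 2 - t⁴ / 24` on `s ≤ 3 / x` makes that integral at least
`9 x / 8`, so `K'(x) ≥ 1 ≥ sin x`.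
-/

open Real MeasureTheory Set Filter Topology

theorem cos_le_one_sub_sq_div_two_add_quartic (t : ℝ) : cos t ≤ 1 - t ^ 2 / 2 + t ^ 4 / 24 := by
  wlog ht : 0 ≤ t generalizing t
  · simpa [Even.neg_pow ⟨2, rfl⟩] using this (-t) (by linarith)
  let g (u : ℝ) : ℝ := 1 - u ^ 2 / 2 + u ^ 4 / 24 - cos u
  have hmono : MonotoneOn g (Ici 0) := by
    apply monotoneOn_of_deriv_nonneg (convex_Ici 0) (by fun_prop) (by fun_prop)
    intro u hu
    rw [interior_Ici] at hu
    have hderiv : deriv g u = sin u - (u - u ^ 3 / 6) := by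
      simp (disch := fun_prop) [g]
      ring
    rw [hderiv]
    linarith [sin_ge_sub_cube hu.out.le]
  have := hmono self_mem_Ici ht ht
  simp only [g] at this
  norm_num at this
  linarith

theorem mul_sin_le_sin_mul {x ξ : ℝ} (hx₀ : 0 ≤ x) (hxπ : x ≤ π) (hξ₀ : 0 ≤ ξ) (hξ₁ : ξ ≤ 1) :
    ξ * sin x ≤ sin (x * ξ) := by
  have := strictConcaveOn_sin_Icc.concaveOn.2 (x := 0) (y := x) ⟨le_rfl, pi_pos.le⟩ ⟨hx₀, hxπ⟩
    (sub_nonneg.2 hξ₁) hξ₀ (by ring)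
  simpa [mul_comm x] using this

theorem intervalIntegrable_of_abs_le_mul_rpow {f : ℝ → ℝ} {b C r : ℝ} (hb : 0 ≤ b) (hr : -1 < r)
    (hf : ContinuousOn f (Ioc 0 b)) (hle : ∀ ξ ∈ Ioc 0 b, |f ξ| ≤ C * ξ ^ r) :
    IntervalIntegrable f volume 0 b := by
  refine ((intervalIntegral.intervalIntegrable_rpow' hr).const_mul C).mono_fun' ?_ ?_
  · rw [uIoc_of_le hb]
    exact hf.aestronglyMeasurable measurableSet_Ioc
  · rw [uIoc_of_le hb]
    filter_upwards [ae_restrict_mem measurableSet_Ioc] with ξ hξ using hle ξ hξ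

theorem abs_sin_mul_mul_rpow_le {x ξ p : ℝ} (hξ : 0 < ξ) :
    |sin (x * ξ) * ξ ^ p| ≤ |x| * ξ ^ (p + 1) := by
  rw [rpow_add_one hξ.ne', abs_mul, abs_of_nonneg (rpow_nonneg hξ.le p)]
  calc |sin (x * ξ)| * ξ ^ p ≤ |x * ξ| * ξ ^ p :=
        mul_le_mul_of_nonneg_right abs_sin_le_abs (rpow_nonneg hξ.le p)
    _ = |x| * (ξ ^ p * ξ) := by rw [abs_mul, abs_of_pos hξ]; ring

theorem rpow_mul_one_sub_cos_mul_le {x ξ p : ℝ} (hξ : 0 < ξ) :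
    ξ ^ p * (1 - cos (x * ξ)) ≤ x ^ 2 / 2 * ξ ^ (p + 2) := by
  rw [rpow_add hξ, rpow_two]
  calc ξ ^ p * (1 - cos (x * ξ)) ≤ ξ ^ p * ((x * ξ) ^ 2 / 2) := by
        gcongr; linarith [one_sub_sq_div_two_le_cos (x := x * ξ)]
    _ = x ^ 2 / 2 * (ξ ^ p * ξ ^ 2) := by ring

variable {α : ℝ}

theorem intervalIntegrable_sin_mul_mul_rpow (hα : α < 3) (x : ℝ) :
    IntervalIntegrable (fun ξ => sin (x * ξ) * ξ ^ (1 - α)) volume 0 1 := by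
  refine intervalIntegrable_of_abs_le_mul_rpow zero_le_one (r := 1 - α + 1) (by linarith) ?_
    fun ξ hξ => abs_sin_mul_mul_rpow_le hξ.1
  exact ContinuousOn.mul (by fun_prop)
    (continuousOn_id.rpow_const fun ξ hξ => Or.inl hξ.1.ne')

theorem intervalIntegrable_rpow_neg_mul_one_sub_cos_mul (hα : α < 3) (x : ℝ) :
    IntervalIntegrable (fun s => s ^ (-α) * (1 - cos (x * s))) volume 0 1 := by
  refine intervalIntegrable_of_abs_le_mul_rpow (C := x ^ 2 / 2) zero_le_one (r := -α + 2)
    (by linarith) ?_ fun s hs => ?_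
  · exact ContinuousOn.mul (continuousOn_id.rpow_const fun s hs => Or.inl hs.1.ne')
      (by fun_prop)
  · rw [abs_of_nonneg (mul_nonneg (rpow_nonneg hs.1.le _) (sub_nonneg.2 (cos_le_one _)))]
    exact rpow_mul_one_sub_cos_mul_le hs.1

theorem continuousOn_rpow_mul_one_sub_cos_mul (hα : α < 3) (x : ℝ) :
    ContinuousOn (fun ξ => ξ ^ (1 - α) * (1 - cos (x * ξ))) (Ici 0) := by
  intro ξ hξ
  rcases (mem_Ici.1 hξ).eq_or_lt with rfl | hξ
  · rw [← continuousWithinAt_Ioi_iff_Ici, ContinuousWithinAt]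
    simp only [mul_zero, cos_zero, sub_self]
    refine squeeze_zero' ?_ ?_ (g := fun ξ => x ^ 2 / 2 * ξ ^ (1 - α + 2)) ?_
    · filter_upwards [self_mem_nhdsWithin] with ξ (hξ : 0 < ξ)
      exact mul_nonneg (rpow_nonneg hξ.le _) (sub_nonneg.2 (cos_le_one _))
    · filter_upwards [self_mem_nhdsWithin] with ξ (hξ : 0 < ξ)
      exact rpow_mul_one_sub_cos_mul_le hξ
    · have := ((continuousAt_rpow_const 0 (1 - α + 2) (Or.inr (by linarith))).const_mul
        (x ^ 2 / 2)).tendsto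
      rw [zero_rpow (by linarith), mul_zero] at this
      exact this.mono_left nhdsWithin_le_nhds
  · exact ((continuousAt_rpow_const ξ _ (Or.inl hξ.ne')).mul
      (by fun_prop)).continuousWithinAt

theorem mul_integral_sin_mul_mul_rpow (hα : α < 3) (x : ℝ) :
    x * ∫ ξ in (0:ℝ)..1, sin (x * ξ) * ξ ^ (1 - α)
      = 1 - cos x + (α - 1) * ∫ s in (0:ℝ)..1, s ^ (-α) * (1 - cos (x * s)) := by
  have hderiv : ∀ ξ ∈ Ioo (0:ℝ) 1, HasDerivAt (fun ξ => ξ ^ (1 - α) * (1 - cos (x * ξ)))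
      ((1 - α) * (ξ ^ (-α) * (1 - cos (x * ξ))) + x * (sin (x * ξ) * ξ ^ (1 - α))) ξ := by
    intro ξ hξ
    have h1 := hasDerivAt_rpow_const (x := ξ) (p := 1 - α) (Or.inl hξ.1.ne')
    have h2 := (((hasDerivAt_id ξ).const_mul x).cos).const_sub 1
    refine (h1.mul h2).congr_deriv ?_
    rw [show 1 - α - 1 = -α by ring, id]
    ring
  have hint := intervalIntegral.integral_eq_sub_of_hasDerivAt_of_le zero_le_one
    ((continuousOn_rpow_mul_one_sub_cos_mul hα x).mono Icc_subset_Ici_self) hderiv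
    (((intervalIntegrable_rpow_neg_mul_one_sub_cos_mul hα x).const_mul _).add
      ((intervalIntegrable_sin_mul_mul_rpow hα x).const_mul _))
  rw [intervalIntegral.integral_add
      ((intervalIntegrable_rpow_neg_mul_one_sub_cos_mul hα x).const_mul _)
      ((intervalIntegrable_sin_mul_mul_rpow hα x).const_mul _),
    intervalIntegral.integral_const_mul, intervalIntegral.integral_const_mul] at hint
  simp only [one_rpow, mul_one, mul_zero, cos_zero, sub_self] at hint
  linarith

theorem sin_le_integral_sin_mul_mul_rpow (hα₂ : 2 ≤ α) (hα₃ : α < 3) {x : ℝ} (hx₀ : 0 ≤ x)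
    (hxπ : x ≤ π) : sin x ≤ ∫ ξ in (0:ℝ)..1, sin (x * ξ) * ξ ^ (1 - α) := by
  have hsin : 0 ≤ sin x := sin_nonneg_of_nonneg_of_le_pi hx₀ hxπ
  calc sin x = ∫ _ in (0:ℝ)..1, sin x := by simp
    _ ≤ ∫ ξ in (0:ℝ)..1, sin (x * ξ) * ξ ^ (1 - α) := by
      refine intervalIntegral.integral_mono_on_of_le_Ioo zero_le_one intervalIntegrable_const
        (intervalIntegrable_sin_mul_mul_rpow hα₃ x) fun ξ hξ => ?_
      have hpow : 1 ≤ ξ ^ (1 - α + 1) :=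
        one_le_rpow_of_pos_of_le_one_of_nonpos hξ.1 hξ.2.le (by linarith)
      calc sin x ≤ sin x * ξ ^ (1 - α + 1) := le_mul_of_one_le_right hsin hpow
        _ = ξ * sin x * ξ ^ (1 - α) := by rw [rpow_add_one hξ.1.ne']; ring
        _ ≤ sin (x * ξ) * ξ ^ (1 - α) := mul_le_mul_of_nonneg_right
          (mul_sin_le_sin_mul hx₀ hxπ hξ.1.le hξ.2.le) (rpow_nonneg hξ.1.le _)

theorem sq_div_two_sub_le_rpow_neg_mul_one_sub_cos_mul (hα : 2 ≤ α) (x : ℝ) {s : ℝ}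
    (hs₀ : 0 < s) (hs₁ : s ≤ 1) :
    x ^ 2 / 2 - x ^ 4 * s ^ 2 / 24 ≤ s ^ (-α) * (1 - cos (x * s)) := by
  have hpow : (s ^ 2)⁻¹ ≤ s ^ (-α) := by
    rw [← rpow_two, ← rpow_neg hs₀.le]
    exact rpow_le_rpow_of_exponent_ge hs₀ hs₁ (by linarith)
  calc x ^ 2 / 2 - x ^ 4 * s ^ 2 / 24
      = (s ^ 2)⁻¹ * ((x * s) ^ 2 / 2 - (x * s) ^ 4 / 24) := by field_simp
    _ ≤ (s ^ 2)⁻¹ * (1 - cos (x * s)) := mul_le_mul_of_nonneg_left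
      (by linarith [cos_le_one_sub_sq_div_two_add_quartic (x * s)]) (by positivity)
    _ ≤ s ^ (-α) * (1 - cos (x * s)) :=
      mul_le_mul_of_nonneg_right hpow (sub_nonneg.2 (cos_le_one _))

theorem nine_div_eight_mul_le_integral_rpow_neg_mul_one_sub_cos_mul (hα₂ : 2 ≤ α)
    (hα₃ : α < 3) {x : ℝ} (hx : 3 ≤ x) :
    9 * x / 8 ≤ ∫ s in (0:ℝ)..1, s ^ (-α) * (1 - cos (x * s)) := by
  have hx₀ : 0 < x := by linarith
  have hc₀ : 0 ≤ 3 / x := by positivity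
  have hc₁ : 3 / x ≤ 1 := (div_le_one hx₀).2 hx
  have hint := intervalIntegrable_rpow_neg_mul_one_sub_cos_mul hα₃ x
  calc 9 * x / 8 = ∫ s in (0:ℝ)..3 / x, (x ^ 2 / 2 - x ^ 4 * s ^ 2 / 24) := by
        rw [intervalIntegral.integral_sub intervalIntegrable_const
            (Continuous.intervalIntegrable (by fun_prop) _ _), intervalIntegral.integral_const,
          intervalIntegral.integral_div, intervalIntegral.integral_const_mul, integral_pow]
        norm_num
        field_simp
        ring
    _ ≤ ∫ s in (0:ℝ)..3 / x, s ^ (-α) * (1 - cos (x * s)) :=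
        intervalIntegral.integral_mono_on_of_le_Ioo hc₀
          (Continuous.intervalIntegrable (by fun_prop) _ _)
          (hint.mono_set (by rw [uIcc_of_le hc₀, uIcc_of_le zero_le_one]; gcongr))
          fun s hs => sq_div_two_sub_le_rpow_neg_mul_one_sub_cos_mul hα₂ x hs.1 (hs.2.le.trans hc₁)
    _ ≤ ∫ s in (0:ℝ)..1, s ^ (-α) * (1 - cos (x * s)) := by
        refine intervalIntegral.integral_mono_interval le_rfl hc₀ hc₁ ?_ hint
        filter_upwards [ae_restrict_mem measurableSet_Ioc] with s hs
        exact mul_nonneg (rpow_nonneg hs.1.le _) (sub_nonneg.2 (cos_le_one _))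

/-- For α ∈ (2,3) and K'(x) = ∫₀¹ sin(xξ)/ξ^{α−1} dξ, one has
K'(x) ≥ sin x and K'(x) ≥ (1−cos x)/x for all x > 0. -/
theorem Kprime_lower_bounds (α : ℝ) (hα : α ∈ Set.Ioo (2:ℝ) 3)
    (K' : ℝ → ℝ)
    (hK' : ∀ x : ℝ, K' x = ∫ ξ in (0:ℝ)..1, Real.sin (x * ξ) / ξ ^ (α - 1)) :
    ∀ x : ℝ, 0 < x →
      Real.sin x ≤ K' x ∧ (1 - Real.cos x) / x ≤ K' x := by
  obtain ⟨hα₂, hα₃⟩ := hα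
  intro x hx
  have hK : K' x = ∫ ξ in (0:ℝ)..1, sin (x * ξ) * ξ ^ (1 - α) := by
    rw [hK' x]
    refine intervalIntegral.integral_congr fun ξ hξ => ?_
    rw [uIcc_of_le zero_le_one] at hξ
    simp only [div_eq_mul_inv, ← rpow_neg hξ.1, neg_sub]
  have hidentity := mul_integral_sin_mul_mul_rpow hα₃ x
  rw [← hK] at hidentity
  set J := ∫ s in (0:ℝ)..1, s ^ (-α) * (1 - cos (x * s))
  have hJ : 0 ≤ J := intervalIntegral.integral_nonneg zero_le_one fun s hs =>
    mul_nonneg (rpow_nonneg hs.1 _) (sub_nonneg.2 (cos_le_one _))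
  refine ⟨?_, by rw [div_le_iff₀ hx]; nlinarith⟩
  rcases le_or_gt x π with hxπ | hxπ
  · exact hK ▸ sin_le_integral_sin_mul_mul_rpow hα₂.le hα₃ hx.le hxπ
  · have hJx := nine_div_eight_mul_le_integral_rpow_neg_mul_one_sub_cos_mul hα₂.le hα₃
      (pi_gt_three.le.trans hxπ.le)
    have hxK : x * 1 ≤ x * K' x := by
      nlinarith [cos_le_one x, mul_nonneg (by linarith : (0:ℝ) ≤ α - 2) hJ]
    exact (sin_le_one x).trans (le_of_mul_le_mul_left hxK hx)
end

section
/- Let α ∈ (2,3), δ > 0, and λ_δ(n) = (2(3−α)/δ²) K(nδ) where K(x) = ∫₀¹ (1−cos(xξ))/ξ^α dξ. Then n ↦ 1/λ_δ(n) is strictly decreasing and strictly convex on (0,∞); equivalently, 2(K'(x))² − K(x)K''(x) > 0 for all x > 0. -/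
/-!
With `K = weightedIntegral (1 - cos) α`, `K' = weightedIntegral sin (α - 1)` and
`K'' = weightedIntegral cos (α - 2)`, integrating by parts in `ξ` gives
`x K' = (α - 1) K + (1 - cos x)` and `x K'' = (α - 2) K' + sin x`, hence
`(α - 1) x (2 K'² - K K'') = (K' - sin x) (x K' - (1 - cos x)) + (α - 1) K' (x K' + 1 - cos x)`,
where `x K' - (1 - cos x) = (α - 1) K > 0`. The right side is positive when `K' ≥ sin x`, which
holds for `x ≤ π` by concavity of `sin` on `[0, π]`. For `x ≥ π`, the bound `1 - cos t ≥ 2 t² / π²`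
on `[0, π]` gives `K ≥ 2x/π`, so `K' > 1/2`, which suffices since `sin x ≤ 1`.
Finally `(1/g)'' = (2 g'² - g g'') / g³` for `g n = c K (n δ)`.
-/

open Real MeasureTheory Set Filter Metric Topology intervalIntegral

noncomputable def weightedIntegral (φ : ℝ → ℝ) (β x : ℝ) : ℝ :=
  ∫ ξ in (0:ℝ)..1, φ (x * ξ) / ξ ^ β

section WeightedIntegral

variable {φ φ' : ℝ → ℝ} {β C C' : ℝ} {n m : ℕ}

lemma intervalIntegrable_of_abs_le_rpow {f : ℝ → ℝ} (hf : Measurable f) {r : ℝ}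
    (hr : -1 < r) (hb : ∀ ξ ∈ Ioc (0:ℝ) 1, |f ξ| ≤ C * ξ ^ r) :
    IntervalIntegrable f volume 0 1 := by
  have hg := (intervalIntegrable_rpow' (a := 0) (b := 1) hr).const_mul C
  rw [intervalIntegrable_iff_integrableOn_Ioc_of_le zero_le_one] at hg ⊢
  refine hg.mono' hf.aestronglyMeasurable ?_
  filter_upwards [ae_restrict_mem measurableSet_Ioc] with ξ hξ using hb ξ hξ

lemma abs_div_rpow_le_of_abs_le_pow (hb : ∀ t, |φ t| ≤ C * |t| ^ n) (x : ℝ) {ξ : ℝ}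
    (hξ : 0 < ξ) : |φ (x * ξ) / ξ ^ β| ≤ C * |x| ^ n * ξ ^ ((n : ℝ) - β) := by
  have hξβ : 0 < ξ ^ β := rpow_pos_of_pos hξ β
  rw [abs_div, abs_of_pos hξβ, rpow_sub hξ, rpow_natCast, ← mul_div_assoc,
    div_le_div_iff_of_pos_right hξβ]
  calc |φ (x * ξ)| ≤ C * |x * ξ| ^ n := hb _
    _ = C * |x| ^ n * ξ ^ n := by rw [abs_mul, abs_of_pos hξ, mul_pow, mul_assoc]

lemma measurable_div_rpow (hφ : Continuous φ) (β x : ℝ) :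
    Measurable fun ξ => φ (x * ξ) / ξ ^ β :=
  (hφ.comp (continuous_const_mul x)).measurable.div (measurable_id.pow_const β)

lemma intervalIntegrable_div_rpow (hφ : Continuous φ) (hb : ∀ t, |φ t| ≤ C * |t| ^ n)
    (hβ : β < n + 1) (x : ℝ) :
    IntervalIntegrable (fun ξ => φ (x * ξ) / ξ ^ β) volume 0 1 :=
  intervalIntegrable_of_abs_le_rpow (measurable_div_rpow hφ β x) (by linarith)
    fun _ hξ => abs_div_rpow_le_of_abs_le_pow hb x hξ.1

lemma hasDerivAt_weightedIntegral (hφ : ∀ t, HasDerivAt φ (φ' t) t) (hφ' : Continuous φ')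
    (hb : ∀ t, |φ t| ≤ C * |t| ^ n) (hb' : ∀ t, |φ' t| ≤ C' * |t| ^ m)
    (hβn : β < n + 1) (hβm : β < m + 2) (x₀ : ℝ) :
    HasDerivAt (weightedIntegral φ β) (weightedIntegral φ' (β - 1) x₀) x₀ := by
  have hφc : Continuous φ := continuous_iff_continuousAt.2 fun t => (hφ t).continuousAt
  refine (hasDerivAt_integral_of_dominated_loc_of_deriv_le
    (F' := fun x ξ => φ' (x * ξ) / ξ ^ (β - 1))
    (bound := fun ξ => C' * (|x₀| + 1) ^ m * ξ ^ ((m : ℝ) - (β - 1)))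
    (ball_mem_nhds x₀ one_pos)
    (Eventually.of_forall fun x => (measurable_div_rpow hφc β x).aestronglyMeasurable)
    (intervalIntegrable_div_rpow hφc hb hβn x₀)
    (measurable_div_rpow hφ' (β - 1) x₀).aestronglyMeasurable ?_
    ((intervalIntegrable_rpow' (by linarith)).const_mul _) ?_).2
  · refine ae_of_all _ fun ξ hξ x hx => ?_
    rw [uIoc_of_le zero_le_one] at hξ
    have hC' : 0 ≤ C' := by simpa using (abs_nonneg _).trans (hb' 1)
    have hx : |x| ≤ |x₀| + 1 := by
      have := abs_sub_abs_le_abs_sub x x₀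
      rw [mem_ball, dist_eq] at hx
      linarith
    calc ‖φ' (x * ξ) / ξ ^ (β - 1)‖ ≤ C' * |x| ^ m * ξ ^ ((m : ℝ) - (β - 1)) :=
          abs_div_rpow_le_of_abs_le_pow hb' x hξ.1
      _ ≤ C' * (|x₀| + 1) ^ m * ξ ^ ((m : ℝ) - (β - 1)) := by
          gcongr
          exact rpow_nonneg hξ.1.le _
  · refine ae_of_all _ fun ξ hξ x _ => ?_
    rw [uIoc_of_le zero_le_one] at hξ
    have hξβ : ξ ^ β = ξ ^ (β - 1) * ξ := by
      rw [← rpow_add_one hξ.1.ne', sub_add_cancel]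
    have := ((hφ (x * ξ)).comp x (hasDerivAt_mul_const ξ)).div_const (ξ ^ β)
    refine this.congr_deriv ?_
    rw [hξβ]
    field_simp [hξ.1.ne']

lemma mul_weightedIntegral_deriv (hφ : ∀ t, HasDerivAt φ (φ' t) t) (hφ' : Continuous φ')
    (hφ0 : φ 0 = 0) (hb : ∀ t, |φ t| ≤ C * |t| ^ n) (hb' : ∀ t, |φ' t| ≤ C' * |t| ^ m)
    (hβn : β < n + 1) (hβm : β < m + 2) (x : ℝ) :
    x * weightedIntegral φ' (β - 1) x = (β - 1) * weightedIntegral φ β x + φ x := by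
  have hφc : Continuous φ := continuous_iff_continuousAt.2 fun t => (hφ t).continuousAt
  set H : ℝ → ℝ := fun ξ => φ (x * ξ) * ξ ^ (1 - β)
  have hH : ∀ ξ, 0 < ξ → H ξ = ξ * (φ (x * ξ) / ξ ^ β) := fun ξ hξ => by
    simp only [H, rpow_sub hξ, rpow_one]
    ring
  have hH_cont : ContinuousOn H (Icc 0 1) := by
    intro ξ hξ
    rcases hξ.1.eq_or_lt with rfl | hξ0
    · have hbound : ∀ t ∈ Icc (0:ℝ) 1, ‖H t‖ ≤ C * |x| ^ n * t ^ ((n : ℝ) + 1 - β) := by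
        rintro t ⟨ht0, -⟩
        rcases ht0.eq_or_lt with rfl | ht0
        · simp [H, hφ0, zero_rpow (by linarith : (n : ℝ) + 1 - β ≠ 0)]
        · rw [hH t ht0, norm_mul, norm_of_nonneg ht0.le, Real.norm_eq_abs,
            add_sub_right_comm, rpow_add_one' ht0.le (by linarith)]
          have := abs_div_rpow_le_of_abs_le_pow (β := β) hb x ht0
          nlinarith
      have hlim : Tendsto (fun t : ℝ => C * |x| ^ n * t ^ ((n : ℝ) + 1 - β))
          (𝓝[Icc 0 1] 0) (𝓝 0) := by
        have hpow : (0:ℝ) ≤ n + 1 - β := by linarith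
        have := ((continuous_id.rpow_const fun _ => Or.inr hpow).tendsto 0).const_mul (C * |x| ^ n)
        rw [id, zero_rpow (by linarith : (n : ℝ) + 1 - β ≠ 0), mul_zero] at this
        exact this.mono_left nhdsWithin_le_nhds
      simpa [ContinuousWithinAt, H, hφ0] using
        squeeze_zero_norm' (eventually_nhdsWithin_of_forall hbound) hlim
    · exact ((hφc.comp (continuous_const_mul x)).continuousAt.mul
        (continuousAt_id.rpow_const (Or.inl hξ0.ne'))).continuousWithinAt
  have hH_deriv : ∀ ξ ∈ Ioo (0:ℝ) 1, HasDerivAt H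
      (x * (φ' (x * ξ) / ξ ^ (β - 1)) + (1 - β) * (φ (x * ξ) / ξ ^ β)) ξ := by
    intro ξ hξ
    have h := ((hφ (x * ξ)).comp ξ ((hasDerivAt_id ξ).const_mul x)).mul
      (hasDerivAt_rpow_const (p := 1 - β) (Or.inl hξ.1.ne'))
    refine h.congr_deriv ?_
    rw [show 1 - β = -(β - 1) by ring, show -(β - 1) - 1 = -β by ring, rpow_neg hξ.1.le,
      rpow_neg hξ.1.le]
    simp only [Function.comp_apply]
    ring
  have hint' := (intervalIntegrable_div_rpow hφ' hb' (by linarith : β - 1 < m + 1) x).const_mul x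
  have hint := (intervalIntegrable_div_rpow hφc hb hβn x).const_mul (1 - β)
  have hFTC := integral_eq_sub_of_hasDeriv_right_of_le zero_le_one hH_cont
    (fun ξ hξ => (hH_deriv ξ hξ).hasDerivWithinAt) (hint'.add hint)
  rw [integral_add hint' hint, intervalIntegral.integral_const_mul,
    intervalIntegral.integral_const_mul] at hFTC
  simp only [weightedIntegral, H, mul_zero, hφ0, zero_mul, mul_one, one_rpow, sub_zero] at hFTC ⊢
  linarith

end WeightedIntegral

section Kernel

variable {α : ℝ}

lemma abs_one_sub_cos_le_half_mul_sq (t : ℝ) : |1 - cos t| ≤ 1 / 2 * |t| ^ 2 := by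
  rw [abs_of_nonneg (sub_nonneg.2 (cos_le_one t)), sq_abs]
  linarith [one_sub_sq_div_two_le_cos (x := t)]

lemma abs_sin_le_pow_one (t : ℝ) : |sin t| ≤ 1 * |t| ^ 1 := by
  simpa using abs_sin_le_abs

lemma abs_cos_le_pow_zero (t : ℝ) : |cos t| ≤ 1 * |t| ^ 0 := by
  simpa using abs_cos_le_one t

lemma hasDerivAt_one_sub_cos (t : ℝ) : HasDerivAt (fun t => 1 - cos t) (sin t) t := by
  simpa using (hasDerivAt_cos t).const_sub 1

lemma hasDerivAt_weightedIntegral_one_sub_cos (hα : α < 3) (x : ℝ) :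
    HasDerivAt (weightedIntegral (fun t => 1 - cos t) α) (weightedIntegral sin (α - 1) x) x :=
  hasDerivAt_weightedIntegral hasDerivAt_one_sub_cos continuous_sin abs_one_sub_cos_le_half_mul_sq
    abs_sin_le_pow_one (by push_cast; linarith) (by push_cast; linarith) x

lemma hasDerivAt_weightedIntegral_sin (hα : α < 3) (x : ℝ) :
    HasDerivAt (weightedIntegral sin (α - 1)) (weightedIntegral cos (α - 2) x) x := by
  simpa only [sub_sub, one_add_one_eq_two] using
    hasDerivAt_weightedIntegral (β := α - 1) hasDerivAt_sin continuous_cos abs_sin_le_pow_one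
      abs_cos_le_pow_zero (by push_cast; linarith) (by push_cast; linarith) x

lemma mul_weightedIntegral_sin (hα : α < 3) (x : ℝ) :
    x * weightedIntegral sin (α - 1) x =
      (α - 1) * weightedIntegral (fun t => 1 - cos t) α x + (1 - cos x) :=
  mul_weightedIntegral_deriv hasDerivAt_one_sub_cos continuous_sin (by simp)
    abs_one_sub_cos_le_half_mul_sq abs_sin_le_pow_one (by push_cast; linarith)
    (by push_cast; linarith) x

lemma mul_weightedIntegral_cos (hα : α < 3) (x : ℝ) :
    x * weightedIntegral cos (α - 2) x = (α - 2) * weightedIntegral sin (α - 1) x + sin x := by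
  simpa only [sub_sub, one_add_one_eq_two] using
    mul_weightedIntegral_deriv (β := α - 1) hasDerivAt_sin continuous_cos sin_zero
      abs_sin_le_pow_one abs_cos_le_pow_zero (by push_cast; linarith) (by push_cast; linarith) x

lemma mul_sq_div_pi_sq_le_weightedIntegral_one_sub_cos (hα2 : 2 ≤ α) (hα3 : α < 3) {x m : ℝ}
    (hm0 : 0 ≤ m) (hm1 : m ≤ 1) (hxm : |x| * m ≤ π) :
    2 * x ^ 2 * m / π ^ 2 ≤ weightedIntegral (fun t => 1 - cos t) α x := by
  have hint := intervalIntegrable_div_rpow (φ := fun t => 1 - cos t) (β := α)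
    (continuous_const.sub continuous_cos) abs_one_sub_cos_le_half_mul_sq (by push_cast; linarith) x
  have hpointwise : ∀ ξ ∈ Ioo 0 m, 2 * x ^ 2 / π ^ 2 ≤ (1 - cos (x * ξ)) / ξ ^ α := by
    rintro ξ ⟨hξ0, hξm⟩
    have hcos := cos_le_one_sub_mul_cos_sq (x := x * ξ)
      (by rw [abs_mul, abs_of_pos hξ0]; nlinarith [abs_nonneg x])
    have hξα : ξ ^ α ≤ ξ ^ (2 : ℝ) := rpow_le_rpow_of_exponent_ge hξ0 (by linarith) hα2
    calc 2 * x ^ 2 / π ^ 2 = 2 / π ^ 2 * (x * ξ) ^ 2 / ξ ^ (2 : ℝ) := by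
          rw [rpow_two]; field_simp
      _ ≤ (1 - cos (x * ξ)) / ξ ^ (2 : ℝ) := by gcongr; linarith
      _ ≤ (1 - cos (x * ξ)) / ξ ^ α :=
          div_le_div_of_nonneg_left (by linarith [cos_le_one (x * ξ)]) (rpow_pos_of_pos hξ0 α) hξα
  calc 2 * x ^ 2 * m / π ^ 2 = ∫ _ in (0:ℝ)..m, 2 * x ^ 2 / π ^ 2 := by simp; ring
    _ ≤ ∫ ξ in (0:ℝ)..m, (1 - cos (x * ξ)) / ξ ^ α :=
        integral_mono_on_of_le_Ioo hm0 intervalIntegrable_const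
          (hint.mono_set (by simp [uIcc_of_le, hm0, hm1, Icc_subset_Icc])) hpointwise
    _ ≤ weightedIntegral (fun t => 1 - cos t) α x :=
        integral_mono_interval le_rfl hm0 hm1 (by
          filter_upwards [ae_restrict_mem measurableSet_Ioc] with ξ hξ
          exact div_nonneg (sub_nonneg.2 (cos_le_one _)) (rpow_nonneg hξ.1.le _)) hint

lemma weightedIntegral_one_sub_cos_pos (hα2 : 2 ≤ α) (hα3 : α < 3) {x : ℝ} (hx : 0 < x) :
    0 < weightedIntegral (fun t => 1 - cos t) α x := by
  have hm : 0 < min 1 (π / x) := lt_min one_pos (div_pos pi_pos hx)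
  refine lt_of_lt_of_le (by positivity) (mul_sq_div_pi_sq_le_weightedIntegral_one_sub_cos hα2 hα3
    hm.le (min_le_left _ _) ?_)
  calc |x| * min 1 (π / x) ≤ x * (π / x) := by
        rw [abs_of_pos hx]; gcongr; exact min_le_right _ _
    _ = π := by field_simp

lemma weightedIntegral_sin_pos (hα2 : 2 ≤ α) (hα3 : α < 3) {x : ℝ} (hx : 0 < x) :
    0 < weightedIntegral sin (α - 1) x := by
  have hK := weightedIntegral_one_sub_cos_pos hα2 hα3 hx
  have hxK' := mul_weightedIntegral_sin hα3 x
  refine pos_of_mul_pos_right ?_ hx.le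
  nlinarith [cos_le_one x]

lemma sin_le_weightedIntegral_sin (hα2 : 2 ≤ α) (hα3 : α < 3) {x : ℝ} (hx0 : 0 ≤ x)
    (hxπ : x ≤ π) : sin x ≤ weightedIntegral sin (α - 1) x := by
  have hint := intervalIntegrable_div_rpow (β := α - 1) continuous_sin abs_sin_le_pow_one
    (by push_cast; linarith) x
  have hpointwise : ∀ ξ ∈ Ioo (0:ℝ) 1, sin x ≤ sin (x * ξ) / ξ ^ (α - 1) := by
    rintro ξ ⟨hξ0, hξ1⟩
    have hconcave : ξ * sin x ≤ sin (x * ξ) := by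
      simpa [mul_comm x ξ] using strictConcaveOn_sin_Icc.concaveOn.2 ⟨hx0, hxπ⟩
        ⟨le_rfl, pi_pos.le⟩ hξ0.le (sub_nonneg.2 hξ1.le) (add_sub_cancel ξ 1)
    have hξα : ξ ^ (α - 1) ≤ ξ := by
      simpa using rpow_le_rpow_of_exponent_ge hξ0 hξ1.le (by linarith : (1:ℝ) ≤ α - 1)
    calc sin x = ξ * sin x / ξ := by field_simp
      _ ≤ sin (x * ξ) / ξ := by gcongr
      _ ≤ sin (x * ξ) / ξ ^ (α - 1) :=
          div_le_div_of_nonneg_left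
            (hconcave.trans' (mul_nonneg hξ0.le (sin_nonneg_of_nonneg_of_le_pi hx0 hxπ)))
            (rpow_pos_of_pos hξ0 _) hξα
  calc sin x = ∫ _ in (0:ℝ)..1, sin x := by simp
    _ ≤ weightedIntegral sin (α - 1) x :=
        integral_mono_on_of_le_Ioo zero_le_one intervalIntegrable_const hint hpointwise

lemma half_lt_weightedIntegral_sin (hα2 : 2 ≤ α) (hα3 : α < 3) {x : ℝ} (hx : π ≤ x) :
    1 / 2 < weightedIntegral sin (α - 1) x := by
  have hx0 : 0 < x := pi_pos.trans_le hx
  have hK : 2 * x / π ≤ weightedIntegral (fun t => 1 - cos t) α x := by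
    convert mul_sq_div_pi_sq_le_weightedIntegral_one_sub_cos hα2 hα3 (m := π / x) (by positivity)
      ((div_le_one hx0).2 hx) (by rw [abs_of_pos hx0, mul_div_cancel₀ _ hx0.ne']) using 1
    field_simp
  have hKnonneg := (weightedIntegral_one_sub_cos_pos hα2 hα3 hx0).le
  refine lt_of_mul_lt_mul_left ?_ hx0.le
  calc x * (1 / 2) < 2 * x / π := by rw [lt_div_iff₀ pi_pos]; nlinarith [pi_lt_four]
    _ ≤ (α - 1) * weightedIntegral (fun t => 1 - cos t) α x + (1 - cos x) := by
        nlinarith [cos_le_one x]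
    _ = x * weightedIntegral sin (α - 1) x := (mul_weightedIntegral_sin hα3 x).symm

end Kernel

lemma two_mul_sq_sub_mul_pos {α x k a d u s : ℝ} (hα : 2 ≤ α) (hx : 0 < x) (hk : 0 < k)
    (hu : 0 ≤ u) (hs : s ≤ 1) (hka : x * a = (α - 1) * k + u) (hda : x * d = (α - 2) * a + s)
    (ha : s ≤ a ∨ 1 / 2 < a) : 0 < 2 * a ^ 2 - k * d := by
  have hxa : 0 < x * a - u := by nlinarith
  have ha0 : 0 < a := pos_of_mul_pos_right (by linarith) hx.le
  have key : (α - 1) * x * (2 * a ^ 2 - k * d) =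
      (a - s) * (x * a - u) + (α - 1) * a * (x * a + u) := by
    linear_combination ((α - 2) * a + s) * hka - (α - 1) * k * hda
  have hrhs : 0 < (a - s) * (x * a - u) + (α - 1) * a * (x * a + u) := by
    have hmain : 0 < (α - 1) * a * (x * a + u) :=
      mul_pos (mul_pos (by linarith) ha0) (by linarith)
    rcases le_or_gt s a with hsa | has
    · nlinarith [mul_nonneg (sub_nonneg.2 hsa) hxa.le]
    · have ha2 : 1 / 2 < a := ha.resolve_left has.not_ge
      nlinarith [mul_lt_mul_of_pos_right (by linarith : s - a < a) hxa,
        mul_nonneg (by linarith : (0:ℝ) ≤ α - 2) (mul_nonneg ha0.le (by linarith : 0 ≤ x * a + u))]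
  rw [← key] at hrhs
  exact pos_of_mul_pos_right hrhs (by nlinarith)

lemma two_mul_sq_weightedIntegral_sin_sub_pos {α : ℝ} (hα2 : 2 ≤ α) (hα3 : α < 3) {x : ℝ}
    (hx : 0 < x) :
    0 < 2 * weightedIntegral sin (α - 1) x ^ 2 -
      weightedIntegral (fun t => 1 - cos t) α x * weightedIntegral cos (α - 2) x := by
  refine two_mul_sq_sub_mul_pos hα2 hx (weightedIntegral_one_sub_cos_pos hα2 hα3 hx)
    (sub_nonneg.2 (cos_le_one x)) (sin_le_one x) (mul_weightedIntegral_sin hα3 x)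
    (mul_weightedIntegral_cos hα3 x) ?_
  rcases le_total x π with hxπ | hπx
  · exact .inl (sin_le_weightedIntegral_sin hα2 hα3 hx.le hxπ)
  · exact .inr (half_lt_weightedIntegral_sin hα2 hα3 hπx)

section OneDiv

variable {D : Set ℝ} {g g' g'' : ℝ → ℝ}

lemma strictConvexOn_of_hasDerivAt2_pos (hD : Convex ℝ D) (hDo : IsOpen D) {f f' f'' : ℝ → ℝ}
    (hf : ∀ x ∈ D, HasDerivAt f (f' x) x) (hf' : ∀ x ∈ D, HasDerivAt f' (f'' x) x)
    (hf'' : ∀ x ∈ D, 0 < f'' x) : StrictConvexOn ℝ D f := by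
  have hmono : StrictMonoOn f' D :=
    strictMonoOn_of_hasDerivWithinAt_pos hD (fun x hx => (hf' x hx).continuousAt.continuousWithinAt)
      (by rw [hDo.interior_eq]; exact fun x hx => (hf' x hx).hasDerivWithinAt)
      (by rw [hDo.interior_eq]; exact hf'')
  refine StrictMonoOn.strictConvexOn_of_deriv hD
    (fun x hx => (hf x hx).continuousAt.continuousWithinAt) ?_
  rw [hDo.interior_eq]
  exact hmono.congr fun x hx => (hf x hx).deriv.symm

lemma strictAntiOn_one_div (hD : Convex ℝ D) (hDo : IsOpen D)
    (hg : ∀ x ∈ D, HasDerivAt g (g' x) x) (hpos : ∀ x ∈ D, 0 < g x) (hg' : ∀ x ∈ D, 0 < g' x) :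
    StrictAntiOn (fun x => 1 / g x) D := by
  have hmono : StrictMonoOn g D :=
    strictMonoOn_of_hasDerivWithinAt_pos hD (fun x hx => (hg x hx).continuousAt.continuousWithinAt)
      (by rw [hDo.interior_eq]; exact fun x hx => (hg x hx).hasDerivWithinAt)
      (by rw [hDo.interior_eq]; exact hg')
  exact fun x hx y hy hxy => one_div_lt_one_div_of_lt (hpos x hx) (hmono hx hy hxy)

lemma strictConvexOn_one_div (hD : Convex ℝ D) (hDo : IsOpen D)
    (hg : ∀ x ∈ D, HasDerivAt g (g' x) x) (hg' : ∀ x ∈ D, HasDerivAt g' (g'' x) x)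
    (hpos : ∀ x ∈ D, 0 < g x) (hg'' : ∀ x ∈ D, 0 < 2 * g' x ^ 2 - g x * g'' x) :
    StrictConvexOn ℝ D (fun x => 1 / g x) := by
  refine strictConvexOn_of_hasDerivAt2_pos hD hDo (f' := fun x => -g' x / g x ^ 2)
    (f'' := fun x => (2 * g' x ^ 2 - g x * g'' x) / g x ^ 3) (fun x hx => ?_) (fun x hx => ?_)
    fun x hx => div_pos (hg'' x hx) (pow_pos (hpos x hx) 3)
  · simpa only [one_div] using (hg x hx).fun_inv (hpos x hx).ne'
  · have hgx := (hpos x hx).ne'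
    refine ((hg' x hx).fun_neg.fun_div ((hg x hx).fun_pow 2) (by positivity)).congr_deriv ?_
    field_simp
    ring

lemma hasDerivAt_const_mul_comp_mul (hg : ∀ x, HasDerivAt g (g' x) x) (c δ x : ℝ) :
    HasDerivAt (fun n => c * g (n * δ)) (c * δ * g' (x * δ)) x :=
  (((hg (x * δ)).comp x (hasDerivAt_mul_const δ)).const_mul c).congr_deriv (by ring)

variable {c δ : ℝ}

lemma strictAntiOn_one_div_const_mul_comp_mul (hc : 0 < c) (hδ : 0 < δ)
    (hg : ∀ x, HasDerivAt g (g' x) x) (hpos : ∀ x, 0 < x → 0 < g x)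
    (hg' : ∀ x, 0 < x → 0 < g' x) :
    StrictAntiOn (fun n => 1 / (c * g (n * δ))) (Ioi 0) :=
  strictAntiOn_one_div (convex_Ioi 0) isOpen_Ioi
    (fun n _ => hasDerivAt_const_mul_comp_mul hg c δ n)
    (fun _ hn => mul_pos hc (hpos _ (mul_pos hn hδ)))
    (fun _ hn => mul_pos (mul_pos hc hδ) (hg' _ (mul_pos hn hδ)))

lemma strictConvexOn_one_div_const_mul_comp_mul (hc : 0 < c) (hδ : 0 < δ)
    (hg : ∀ x, HasDerivAt g (g' x) x) (hg' : ∀ x, HasDerivAt g' (g'' x) x)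
    (hpos : ∀ x, 0 < x → 0 < g x) (hg'' : ∀ x, 0 < x → 0 < 2 * g' x ^ 2 - g x * g'' x) :
    StrictConvexOn ℝ (Ioi 0) (fun n => 1 / (c * g (n * δ))) := by
  refine strictConvexOn_one_div (convex_Ioi 0) isOpen_Ioi
    (fun n _ => hasDerivAt_const_mul_comp_mul hg c δ n)
    (fun n _ => hasDerivAt_const_mul_comp_mul hg' (c * δ) δ n)
    (fun _ hn => mul_pos hc (hpos _ (mul_pos hn hδ))) fun n hn => ?_
  have hscale : 2 * (c * δ * g' (n * δ)) ^ 2 - c * g (n * δ) * (c * δ * δ * g'' (n * δ)) =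
      (c * δ) ^ 2 * (2 * g' (n * δ) ^ 2 - g (n * δ) * g'' (n * δ)) := by ring
  rw [hscale]
  exact mul_pos (pow_pos (mul_pos hc hδ) 2) (hg'' _ (mul_pos hn hδ))

end OneDiv

/-- For α ∈ (2,3), δ > 0, with K(x) = ∫₀¹ (1−cos(xξ))/ξ^α dξ and
λ_δ(n) = (2(3−α)/δ²) K(nδ), the map n ↦ 1/λ_δ(n) is strictly decreasing and
strictly convex on (0,∞); equivalently 2(K'(x))² − K(x)K''(x) > 0 for x > 0. -/
theorem inv_lambda_decreasing_convex (α δ : ℝ) (hα : α ∈ Set.Ioo (2:ℝ) 3)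
    (hδ : 0 < δ)
    (K K' K'' : ℝ → ℝ)
    (hK : ∀ x : ℝ, K x = ∫ ξ in (0:ℝ)..1, (1 - Real.cos (x * ξ)) / ξ ^ α)
    (hK' : ∀ x : ℝ, K' x = ∫ ξ in (0:ℝ)..1, Real.sin (x * ξ) / ξ ^ (α - 1))
    (hK'' : ∀ x : ℝ, K'' x = ∫ ξ in (0:ℝ)..1, Real.cos (x * ξ) / ξ ^ (α - 2)) :
    StrictAntiOn (fun n : ℝ => 1 / (2 * (3 - α) / δ ^ 2 * K (n * δ)))
      (Set.Ioi (0:ℝ)) ∧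
    StrictConvexOn ℝ (Set.Ioi (0:ℝ))
      (fun n : ℝ => 1 / (2 * (3 - α) / δ ^ 2 * K (n * δ))) ∧
    (∀ x : ℝ, 0 < x → 0 < 2 * (K' x) ^ 2 - K x * K'' x) := by
  obtain ⟨hα2, hα3⟩ := hα
  obtain rfl : K = weightedIntegral (fun t => 1 - cos t) α := funext hK
  obtain rfl : K' = weightedIntegral sin (α - 1) := funext hK'
  obtain rfl : K'' = weightedIntegral cos (α - 2) := funext hK''
  have hc : 0 < 2 * (3 - α) / δ ^ 2 := div_pos (by linarith) (by positivity)
  have hK_pos := fun x (hx : 0 < x) => weightedIntegral_one_sub_cos_pos hα2.le hα3 hx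
  have hK'_pos := fun x (hx : 0 < x) => weightedIntegral_sin_pos hα2.le hα3 hx
  have hkey := fun x (hx : 0 < x) => two_mul_sq_weightedIntegral_sin_sub_pos hα2.le hα3 hx
  exact ⟨strictAntiOn_one_div_const_mul_comp_mul hc hδ
      (hasDerivAt_weightedIntegral_one_sub_cos hα3) hK_pos hK'_pos,
    strictConvexOn_one_div_const_mul_comp_mul hc hδ (hasDerivAt_weightedIntegral_one_sub_cos hα3)
      (hasDerivAt_weightedIntegral_sin hα3) hK_pos hkey,
    hkey⟩
end

section
/- For α ∈ (2,3) and δ > 0, there exist constants D₁(δ), D₂(δ) > 0 such that D₁(δ) n^{α−2} ≤ dλ_δ/dn (n) ≤ D₂(δ) n^{α−2} for all n ≥ 1, where dλ_δ/dn = (2(3−α)/δ^{3−α}) n^{α−2} ∫₀^{nδ} sin(s)/s^{α−1} ds. One may take D₂(δ) = (2(3−α)/δ^{3−α})∫₀^π sin(s) s^{1−α} ds and D₁(δ) = (2(3−α)/δ^{3−α}) min{∫₀^{2π} sin(s) s^{1−α} ds, ∫₀^δ sin(s) s^{1−α} ds}. -/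
open Real MeasureTheory intervalIntegral

namespace Stmt19Aux

lemma uIcc_sub {a b : ℝ} (ha : 0 ≤ a) (hb : 0 ≤ b) : Set.uIcc a b ⊆ Set.Ici 0 := by
  intro x hx
  rcases Set.mem_uIcc.1 hx with h | h
  · exact le_trans ha h.1
  · exact le_trans hb h.1

lemma intCont {f : ℝ → ℝ} (hf : ContinuousOn f (Set.Ici 0)) {a b : ℝ}
    (ha : 0 ≤ a) (hb : 0 ≤ b) : IntervalIntegrable f volume a b :=
  (hf.mono (uIcc_sub ha hb)).intervalIntegrable

/-- One-window step: for `h` nonneg and antitone on `[0,∞)`,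
the integral of `sin u * h u` over `[2Kπ, y]` is nonneg for `y` in the window. -/
lemma key_step (h : ℝ → ℝ) (hcont : ContinuousOn h (Set.Ici 0))
    (hanti : AntitoneOn h (Set.Ici 0)) (hnn : ∀ u, 0 ≤ u → 0 ≤ h u)
    (K : ℕ) {y : ℝ} (hy1 : 2 * K * π ≤ y) (hy2 : y ≤ 2 * K * π + 2 * π) :
    0 ≤ ∫ u in (2 * K * π)..y, Real.sin u * h u := by
  have hπ : (0:ℝ) < π := Real.pi_pos
  set c : ℝ := 2 * K * π with hc_def
  have hc : (0:ℝ) ≤ c := by positivity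
  have hy0 : 0 ≤ y := le_trans hc hy1
  have hfc : ContinuousOn (fun u => Real.sin u * h u) (Set.Ici 0) :=
    Real.continuous_sin.continuousOn.mul hcont
  have hcont' : ContinuousOn (fun u => h (u + π)) (Set.Ici 0) := by
    apply hcont.comp (Continuous.continuousOn (by continuity))
    intro u hu
    simp only [Set.mem_Ici] at *
    linarith
  have hfc' : ContinuousOn (fun u => Real.sin u * h (u + π)) (Set.Ici 0) :=
    Real.continuous_sin.continuousOn.mul hcont'
  have hsin_eq : ∀ s : ℝ, Real.sin s = Real.sin (s - c) := by
    intro s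
    rw [← Real.sin_add_nat_mul_two_pi (s - c) K]
    congr 1
    rw [hc_def]; push_cast; ring
  have hsin_nn : ∀ s ∈ Set.Icc c (c + π), 0 ≤ Real.sin s := by
    intro s hs
    rw [hsin_eq s]
    exact Real.sin_nonneg_of_nonneg_of_le_pi (by linarith [hs.1]) (by linarith [hs.2])
  have hsin_np : ∀ s ∈ Set.Icc (c + π) (c + 2 * π), Real.sin s ≤ 0 := by
    intro s hs
    rw [hsin_eq s]
    have he : Real.sin (s - c) = -Real.sin (s - c - π) := by
      rw [← Real.sin_add_pi]; congr 1; ring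
    rw [he, neg_nonpos]
    exact Real.sin_nonneg_of_nonneg_of_le_pi (by linarith [hs.1]) (by linarith [hs.2])
  rcases le_or_gt y (c + π) with hcase | hcase
  · apply intervalIntegral.integral_nonneg hy1
    intro u hu
    have h1 : c ≤ u := hu.1
    have h2 : u ≤ c + π := le_trans hu.2 hcase
    exact mul_nonneg (hsin_nn u ⟨h1, h2⟩) (hnn u (le_trans hc h1))
  · have hI1 : IntervalIntegrable (fun u => Real.sin u * h u) volume c (c + π) :=
      intCont hfc hc (by linarith)
    have hI2 : IntervalIntegrable (fun u => Real.sin u * h u) volume (c + π) y :=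
      intCont hfc (by linarith) hy0
    have hI3 : IntervalIntegrable (fun u => Real.sin u * h u) volume y (c + 2 * π) :=
      intCont hfc hy0 (by linarith)
    have hsplit : (∫ u in c..y, Real.sin u * h u)
        = (∫ u in c..(c + π), Real.sin u * h u) + ∫ u in (c + π)..y, Real.sin u * h u :=
      (intervalIntegral.integral_add_adjacent_intervals hI1 hI2).symm
    have htail : (∫ u in y..(c + 2 * π), Real.sin u * h u) ≤ 0 := by
      have hneg := intervalIntegral.integral_nonneg (μ := volume) (f := fun u => -(Real.sin u * h u))
        (a := y) (b := c + 2 * π) (by linarith)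
        (fun u hu => by
          have h1 : c + π ≤ u := le_trans hcase.le hu.1
          have h2 : u ≤ c + 2 * π := hu.2
          have := mul_nonpos_of_nonpos_of_nonneg (hsin_np u ⟨h1, h2⟩)
            (hnn u (by linarith))
          show (0:ℝ) ≤ -(Real.sin u * h u)
          linarith)
      rw [intervalIntegral.integral_neg] at hneg
      linarith
    have hge : (∫ u in (c + π)..(c + 2 * π), Real.sin u * h u)
        ≤ ∫ u in (c + π)..y, Real.sin u * h u := by
      have hs2 := (intervalIntegral.integral_add_adjacent_intervals hI2 hI3).symm
      linarith [hs2, htail]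
    have hpair : (∫ u in (c + π)..(c + 2 * π), Real.sin u * h u)
        = -∫ u in c..(c + π), Real.sin u * h (u + π) := by
      have h1 := intervalIntegral.integral_comp_add_right
        (a := c) (b := c + π) (fun u => Real.sin u * h u) π
      have h2 : c + π + π = c + 2 * π := by ring
      rw [h2] at h1
      rw [← h1, ← intervalIntegral.integral_neg]
      apply intervalIntegral.integral_congr
      intro u _
      simp only [Real.sin_add_pi]
      ring
    have hdiff : 0 ≤ ∫ u in c..(c + π), (Real.sin u * h u - Real.sin u * h (u + π)) := by
      apply intervalIntegral.integral_nonneg (by linarith)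
      intro u hu
      have hu0 : (0:ℝ) ≤ u := le_trans hc hu.1
      have hmono : h (u + π) ≤ h u :=
        hanti (Set.mem_Ici.2 hu0) (Set.mem_Ici.2 (by linarith)) (by linarith)
      have := mul_le_mul_of_nonneg_left hmono (hsin_nn u hu)
      linarith
    have hIb : IntervalIntegrable (fun u => Real.sin u * h (u + π)) volume c (c + π) :=
      intCont hfc' hc (by linarith)
    rw [intervalIntegral.integral_sub hI1 hIb] at hdiff
    linarith [hsplit, hge, hdiff, hpair]

/-- For `h` nonneg and antitone on `[0,∞)`, `∫₀^y sin u · h u du ≥ 0` for all `y ≥ 0`. -/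
lemma key (h : ℝ → ℝ) (hcont : ContinuousOn h (Set.Ici 0))
    (hanti : AntitoneOn h (Set.Ici 0)) (hnn : ∀ u, 0 ≤ u → 0 ≤ h u)
    {y : ℝ} (hy : 0 ≤ y) : 0 ≤ ∫ u in (0:ℝ)..y, Real.sin u * h u := by
  have hπ : (0:ℝ) < π := Real.pi_pos
  have hfc : ContinuousOn (fun u => Real.sin u * h u) (Set.Ici 0) :=
    Real.continuous_sin.continuousOn.mul hcont
  have main : ∀ K : ℕ, ∀ z : ℝ, 2 * K * π ≤ z → z ≤ 2 * K * π + 2 * π →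
      0 ≤ ∫ u in (0:ℝ)..z, Real.sin u * h u := by
    intro K
    induction K with
    | zero =>
      intro z h1 h2
      have h3 := key_step h hcont hanti hnn 0 (y := z)
        (by push_cast at h1 ⊢; linarith) (by push_cast at h2 ⊢; linarith)
      have he : 2 * ((0:ℕ):ℝ) * π = 0 := by norm_num
      rwa [he] at h3
    | succ K ih =>
      intro z h1 h2
      have hcast : ((K + 1 : ℕ) : ℝ) = (K : ℝ) + 1 := by push_cast; ring
      have h1' : 2 * ((K:ℝ) + 1) * π ≤ z := by
        rw [hcast] at h1; linarith
      have h2' : z ≤ 2 * ((K:ℝ) + 1) * π + 2 * π := by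
        rw [hcast] at h2; linarith
      have hc0 : (0:ℝ) ≤ 2 * ((K:ℝ) + 1) * π := by positivity
      have hprev : 0 ≤ ∫ u in (0:ℝ)..(2 * ((K:ℝ) + 1) * π), Real.sin u * h u :=
        ih (2 * ((K:ℝ) + 1) * π) (by push_cast; nlinarith) (by push_cast; nlinarith)
      have hstep := key_step h hcont hanti hnn (K + 1) (y := z)
        (by rw [hcast]; linarith) (by rw [hcast]; linarith)
      rw [hcast] at hstep
      have hsplit : (∫ u in (0:ℝ)..z, Real.sin u * h u)
          = (∫ u in (0:ℝ)..(2 * ((K:ℝ) + 1) * π), Real.sin u * h u)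
            + ∫ u in (2 * ((K:ℝ) + 1) * π)..z, Real.sin u * h u :=
        (intervalIntegral.integral_add_adjacent_intervals
          (intCont hfc le_rfl hc0)
          (intCont hfc hc0 (by linarith))).symm
      rw [hsplit]
      linarith
  set K : ℕ := ⌊y / (2 * π)⌋₊ with hK
  have h1 : (K : ℝ) ≤ y / (2 * π) := Nat.floor_le (by positivity)
  have h2 : y / (2 * π) < K + 1 := Nat.lt_floor_add_one _
  have h1' : (K : ℝ) * (2 * π) ≤ y := (le_div_iff₀ (by positivity)).1 h1
  have h2' : y < ((K : ℝ) + 1) * (2 * π) := (div_lt_iff₀ (by positivity)).1 h2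
  exact main K y (by nlinarith) (by nlinarith)

end Stmt19Aux

open Stmt19Aux

section Stmt19Main

variable {α : ℝ}

/-- interval integrability of `sin s / s^(α-1)` on nonnegative intervals -/
lemma g_int (hα1 : 2 < α) (hα2 : α < 3) {a b : ℝ} (ha : 0 ≤ a) (hb : 0 ≤ b) :
    IntervalIntegrable (fun s => Real.sin s / s ^ (α - 1)) volume a b := by
  have base : ∀ c : ℝ, 0 ≤ c →
      IntervalIntegrable (fun s => Real.sin s / s ^ (α - 1)) volume 0 c := by
    intro c hc
    have hr : IntervalIntegrable (fun s : ℝ => s ^ (2 - α)) volume 0 c :=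
      intervalIntegral.intervalIntegrable_rpow' (by linarith)
    apply hr.mono_fun
    · apply Measurable.aestronglyMeasurable
      exact Real.measurable_sin.div
        ((Real.continuous_rpow_const (by linarith : (0:ℝ) ≤ α - 1)).measurable)
    · rw [Filter.EventuallyLE, ae_restrict_iff' measurableSet_uIoc]
      filter_upwards with s hs
      rw [Set.uIoc_of_le hc] at hs
      have hs0 : 0 < s := hs.1
      have hpow : (0:ℝ) < s ^ (α - 1) := Real.rpow_pos_of_pos hs0 _
      simp only [Real.norm_eq_abs]
      rw [abs_div, abs_of_pos hpow, abs_of_nonneg (Real.rpow_nonneg hs0.le _)]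
      have hsin : |Real.sin s| ≤ s := by
        have habs := Real.abs_sin_le_abs (x := s)
        rwa [abs_of_pos hs0] at habs
      have heq : s ^ (2 - α) = s / s ^ (α - 1) := by
        rw [show (2 - α) = 1 - (α - 1) by ring, Real.rpow_sub hs0, Real.rpow_one]
      rw [heq]
      apply div_le_div_of_nonneg_right hsin
      exact hpow.le
  exact (base a ha).symm.trans (base b hb)

lemma h_shift_cont (hα1 : 2 < α) {c : ℝ} (hc : 0 < c) :
    ContinuousOn (fun u : ℝ => Real.sin (u + c) * ((u + c) ^ (α - 1))⁻¹) (Set.Ici 0) := by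
  apply ContinuousOn.mul
  · exact (Real.continuous_sin.comp (by continuity)).continuousOn
  · apply ContinuousOn.inv₀
    · exact ((Real.continuous_rpow_const (by linarith : (0:ℝ) ≤ α - 1)).comp
        (by continuity)).continuousOn
    · intro u hu
      simp only [Set.mem_Ici] at hu
      exact ne_of_gt (Real.rpow_pos_of_pos (by linarith) _)

lemma h_inv_cont (hα1 : 2 < α) {c : ℝ} (hc : 0 < c) :
    ContinuousOn (fun u : ℝ => ((u + c) ^ (α - 1))⁻¹) (Set.Ici 0) := by
  apply ContinuousOn.inv₀
  · exact ((Real.continuous_rpow_const (by linarith : (0:ℝ) ≤ α - 1)).comp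
      (by continuity)).continuousOn
  · intro u hu
    simp only [Set.mem_Ici] at hu
    exact ne_of_gt (Real.rpow_pos_of_pos (by linarith) _)

lemma h_inv_anti (hα1 : 2 < α) {c : ℝ} (hc : 0 < c) :
    AntitoneOn (fun u : ℝ => ((u + c) ^ (α - 1))⁻¹) (Set.Ici 0) := by
  intro u hu v hv huv
  simp only [Set.mem_Ici] at hu hv
  exact inv_anti₀ (Real.rpow_pos_of_pos (by linarith) _)
    (Real.rpow_le_rpow (by linarith) (by linarith) (by linarith))

lemma h_inv_nonneg (hα1 : 2 < α) {c : ℝ} (hc : 0 < c) :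
    ∀ u : ℝ, 0 ≤ u → 0 ≤ ((u + c) ^ (α - 1))⁻¹ := fun u hu =>
  inv_nonneg.2 (Real.rpow_nonneg (by linarith) _)

/-- shift identity -/
lemma shift_integral (hα1 : 2 < α) {c x : ℝ} (hc : 0 < c) :
    (∫ s in c..x, Real.sin s / s ^ (α - 1))
      = ∫ u in (0:ℝ)..(x - c), Real.sin (u + c) * (((u + c) ^ (α - 1))⁻¹) := by
  have h1 := intervalIntegral.integral_comp_add_right
    (a := (0:ℝ)) (b := x - c) (fun s => Real.sin s / s ^ (α - 1)) c
  rw [zero_add, sub_add_cancel] at h1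
  rw [← h1]
  apply intervalIntegral.integral_congr
  intro u _
  simp [div_eq_mul_inv]

lemma Q_mono (hα1 : 2 < α) (hα2 : α < 3) {a b : ℝ} (ha : 0 ≤ a) (hab : a ≤ b) (hb : b ≤ π) :
    (∫ s in (0:ℝ)..a, Real.sin s / s ^ (α - 1))
      ≤ ∫ s in (0:ℝ)..b, Real.sin s / s ^ (α - 1) := by
  have hsplit := intervalIntegral.integral_add_adjacent_intervals
    (a := (0:ℝ)) (b := a) (c := b) (f := fun s => Real.sin s / s ^ (α - 1))
    (g_int hα1 hα2 le_rfl ha) (g_int hα1 hα2 ha (by linarith))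
  have hpos : 0 ≤ ∫ s in a..b, Real.sin s / s ^ (α - 1) := by
    apply intervalIntegral.integral_nonneg hab
    intro u hu
    exact div_nonneg
      (Real.sin_nonneg_of_nonneg_of_le_pi (by linarith [hu.1]) (by linarith [hu.2]))
      (Real.rpow_nonneg (by linarith [hu.1]) _)
  linarith [hsplit]

/-- upper bound: `Q x ≤ Q π` for all `x ≥ 0`. -/
lemma Q_le_Qpi (hα1 : 2 < α) (hα2 : α < 3) {x : ℝ} (hx : 0 ≤ x) :
    (∫ s in (0:ℝ)..x, Real.sin s / s ^ (α - 1))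
      ≤ ∫ s in (0:ℝ)..π, Real.sin s / s ^ (α - 1) := by
  have hπ : (0:ℝ) < π := Real.pi_pos
  rcases le_or_gt x π with hxπ | hxπ
  · exact Q_mono hα1 hα2 hx hxπ le_rfl
  · have hsplit := intervalIntegral.integral_add_adjacent_intervals
      (g_int hα1 hα2 le_rfl hπ.le) (g_int hα1 hα2 hπ.le hx)
        (f := fun s => Real.sin s / s ^ (α - 1))
    have hshift := shift_integral (c := π) (x := x) hα1 hπ
    have heq : (fun u => Real.sin (u + π) * (((u + π) ^ (α - 1))⁻¹))
        = fun u => -(Real.sin u * (((u + π) ^ (α - 1))⁻¹)) := by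
      funext u; rw [Real.sin_add_pi]; ring
    have hkey := key (fun u => ((u + π) ^ (α - 1))⁻¹)
      (h_inv_cont hα1 hπ) (h_inv_anti hα1 hπ) (h_inv_nonneg hα1 hπ)
      (y := x - π) (by linarith)
    have htail : (∫ s in π..x, Real.sin s / s ^ (α - 1)) ≤ 0 := by
      rw [hshift, heq, intervalIntegral.integral_neg]
      linarith
    linarith [hsplit]

/-- lower bound: `Q x ≥ Q (2π)` for `x ≥ π`. -/
lemma Q_ge_Q2pi (hα1 : 2 < α) (hα2 : α < 3) {x : ℝ} (hx : π ≤ x) :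
    (∫ s in (0:ℝ)..(2 * π), Real.sin s / s ^ (α - 1))
      ≤ ∫ s in (0:ℝ)..x, Real.sin s / s ^ (α - 1) := by
  have hπ : (0:ℝ) < π := Real.pi_pos
  have hx0 : (0:ℝ) ≤ x := by linarith
  rcases le_or_gt x (2 * π) with hx2 | hx2
  · have hsplit : (∫ s in (0:ℝ)..x, Real.sin s / s ^ (α - 1))
        + (∫ s in x..(2 * π), Real.sin s / s ^ (α - 1))
        = ∫ s in (0:ℝ)..(2 * π), Real.sin s / s ^ (α - 1) :=
      intervalIntegral.integral_add_adjacent_intervals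
        (g_int hα1 hα2 le_rfl hx0) (g_int hα1 hα2 hx0 (by linarith))
    have hneg : (∫ s in x..(2 * π), Real.sin s / s ^ (α - 1)) ≤ 0 := by
      have hneg' := intervalIntegral.integral_nonneg (μ := volume)
        (f := fun s => -(Real.sin s / s ^ (α - 1))) (a := x) (b := 2 * π) hx2
        (fun u hu => by
          have h1 : π ≤ u := le_trans hx hu.1
          have h2 : u ≤ 2 * π := hu.2
          have hsin : Real.sin u ≤ 0 := by
            have he : Real.sin u = -Real.sin (u - π) := by
              rw [← Real.sin_add_pi]; congr 1; ring
            rw [he, neg_nonpos]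
            exact Real.sin_nonneg_of_nonneg_of_le_pi (by linarith) (by linarith)
          have := div_nonpos_of_nonpos_of_nonneg hsin
            (Real.rpow_nonneg (by linarith : (0:ℝ) ≤ u) (α - 1))
          show (0:ℝ) ≤ -(Real.sin u / u ^ (α - 1))
          linarith)
      rw [intervalIntegral.integral_neg] at hneg'
      linarith
    linarith [hsplit]
  · have hsplit := intervalIntegral.integral_add_adjacent_intervals
      (g_int hα1 hα2 le_rfl (by positivity : (0:ℝ) ≤ 2 * π))
      (g_int hα1 hα2 (by positivity : (0:ℝ) ≤ 2 * π) hx0)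
        (f := fun s => Real.sin s / s ^ (α - 1))
    have hshift := shift_integral (c := 2 * π) (x := x) hα1 (by positivity)
    have heq : (fun u => Real.sin (u + 2 * π) * (((u + 2 * π) ^ (α - 1))⁻¹))
        = fun u => Real.sin u * (((u + 2 * π) ^ (α - 1))⁻¹) := by
      funext u; rw [Real.sin_add_two_pi]
    have hkey := key (fun u => ((u + 2 * π) ^ (α - 1))⁻¹)
      (h_inv_cont hα1 (by positivity)) (h_inv_anti hα1 (by positivity))
      (h_inv_nonneg hα1 (by positivity)) (y := x - 2 * π) (by linarith)
    have htail : 0 ≤ ∫ s in (2 * π)..x, Real.sin s / s ^ (α - 1) := by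
      rw [hshift, heq]
      exact hkey
    linarith [hsplit]

/-- positivity of `Q x` for `0 < x ≤ π`. -/
lemma Q_pos_small (hα1 : 2 < α) (hα2 : α < 3) {x : ℝ} (hx : 0 < x) (hxπ : x ≤ π) :
    0 < ∫ s in (0:ℝ)..x, Real.sin s / s ^ (α - 1) := by
  apply intervalIntegral_pos_of_pos_on (g_int hα1 hα2 le_rfl hx.le)
  · intro u hu
    exact div_pos (Real.sin_pos_of_pos_of_lt_pi hu.1 (lt_of_lt_of_le hu.2 hxπ))
      (Real.rpow_pos_of_pos hu.1 _)
  · exact hx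

/-- positivity of `Q (2π)`. -/
lemma Q2pi_pos (hα1 : 2 < α) (hα2 : α < 3) :
    0 < ∫ s in (0:ℝ)..(2 * π), Real.sin s / s ^ (α - 1) := by
  have hπ : (0:ℝ) < π := Real.pi_pos
  have hsplit := intervalIntegral.integral_add_adjacent_intervals
    (a := (0:ℝ)) (b := π) (c := 2 * π) (f := fun s => Real.sin s / s ^ (α - 1))
    (g_int hα1 hα2 le_rfl hπ.le) (g_int hα1 hα2 hπ.le (by positivity))
  have hshift := shift_integral (c := π) (x := 2 * π) hα1 hπ
  have h2ππ : (2:ℝ) * π - π = π := by ring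
  rw [h2ππ] at hshift
  have heq : (fun u => Real.sin (u + π) * (((u + π) ^ (α - 1))⁻¹))
      = fun u => -(Real.sin u * (((u + π) ^ (α - 1))⁻¹)) := by
    funext u; rw [Real.sin_add_pi]; ring
  rw [heq, intervalIntegral.integral_neg] at hshift
  -- now show ∫_0^π sin u * ((u+π)^(α-1))⁻¹ < ∫_0^π sin u / u^(α-1)
  have hIb : IntervalIntegrable (fun u => Real.sin u * ((u + π) ^ (α - 1))⁻¹)
      volume 0 π := by
    apply intCont _ le_rfl hπ.le
    exact Real.continuous_sin.continuousOn.mul (h_inv_cont hα1 hπ)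
  have hIa : IntervalIntegrable (fun s => Real.sin s / s ^ (α - 1)) volume 0 π :=
    g_int hα1 hα2 le_rfl hπ.le
  have hdiff : 0 < ∫ u in (0:ℝ)..π,
      (Real.sin u / u ^ (α - 1) - Real.sin u * ((u + π) ^ (α - 1))⁻¹) := by
    apply intervalIntegral_pos_of_pos_on (hIa.sub hIb) _ hπ
    intro u hu
    have hu0 : 0 < u := hu.1
    have hsin : 0 < Real.sin u := Real.sin_pos_of_pos_of_lt_pi hu.1 hu.2
    have hlt : u ^ (α - 1) < (u + π) ^ (α - 1) :=
      Real.rpow_lt_rpow hu0.le (by linarith) (by linarith)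
    have hinv : ((u + π) ^ (α - 1))⁻¹ < (u ^ (α - 1))⁻¹ :=
      inv_strictAnti₀ (Real.rpow_pos_of_pos hu0 _) hlt
    have := mul_lt_mul_of_pos_left hinv hsin
    rw [div_eq_mul_inv]
    linarith
  rw [intervalIntegral.integral_sub hIa hIb] at hdiff
  linarith [hsplit]

end Stmt19Main

/-- For α ∈ (2,3), δ > 0, the derivative
dλ_δ/dn = (2(3−α)/δ^{3−α}) n^{α−2} ∫₀^{nδ} sin s / s^{α−1} ds satisfies
D₁(δ) n^{α−2} ≤ dλ_δ/dn ≤ D₂(δ) n^{α−2} for all n ≥ 1, with the explicit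
constants D₂(δ) = (2(3−α)/δ^{3−α})∫₀^π sin s / s^{α−1} ds and
D₁(δ) = (2(3−α)/δ^{3−α}) min{∫₀^{2π} sin s / s^{α−1} ds, ∫₀^δ sin s / s^{α−1} ds},
which are positive. -/
theorem lambda_deriv_bounds (α δ : ℝ) (hα : α ∈ Set.Ioo (2:ℝ) 3) (hδ : 0 < δ) :
    (0 < (2 * (3 - α) / δ ^ (3 - α)) *
        min (∫ s in (0:ℝ)..(2 * π), Real.sin s / s ^ (α - 1))
            (∫ s in (0:ℝ)..δ, Real.sin s / s ^ (α - 1))) ∧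
    ∀ n : ℝ, 1 ≤ n →
      ((2 * (3 - α) / δ ^ (3 - α)) *
          min (∫ s in (0:ℝ)..(2 * π), Real.sin s / s ^ (α - 1))
              (∫ s in (0:ℝ)..δ, Real.sin s / s ^ (α - 1))) * n ^ (α - 2) ≤
        (2 * (3 - α) / δ ^ (3 - α)) * n ^ (α - 2) *
          ∫ s in (0:ℝ)..(n * δ), Real.sin s / s ^ (α - 1) ∧
      (2 * (3 - α) / δ ^ (3 - α)) * n ^ (α - 2) *
          (∫ s in (0:ℝ)..(n * δ), Real.sin s / s ^ (α - 1)) ≤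
        ((2 * (3 - α) / δ ^ (3 - α)) *
          ∫ s in (0:ℝ)..π, Real.sin s / s ^ (α - 1)) * n ^ (α - 2) := by
  obtain ⟨hα1, hα2⟩ := hα
  have hπ : (0:ℝ) < π := Real.pi_pos
  set C : ℝ := 2 * (3 - α) / δ ^ (3 - α) with hC_def
  have hC : 0 < C := by
    apply div_pos (by linarith)
    exact Real.rpow_pos_of_pos hδ _
  set Q2 : ℝ := ∫ s in (0:ℝ)..(2 * π), Real.sin s / s ^ (α - 1) with hQ2_def
  set Qδ : ℝ := ∫ s in (0:ℝ)..δ, Real.sin s / s ^ (α - 1) with hQδ_def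
  set Qπ : ℝ := ∫ s in (0:ℝ)..π, Real.sin s / s ^ (α - 1) with hQπ_def
  have hQ2pos : 0 < Q2 := Q2pi_pos hα1 hα2
  have hQδpos : 0 < Qδ := by
    rcases le_or_gt δ π with hδπ | hδπ
    · exact Q_pos_small hα1 hα2 hδ hδπ
    · exact lt_of_lt_of_le hQ2pos (Q_ge_Q2pi hα1 hα2 hδπ.le)
  have hmin : 0 < min Q2 Qδ := lt_min hQ2pos hQδpos
  refine ⟨mul_pos hC hmin, ?_⟩
  intro n hn
  have hn0 : (0:ℝ) < n := by linarith
  have hnδ : 0 < n * δ := mul_pos hn0 hδ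
  have hN : 0 < n ^ (α - 2) := Real.rpow_pos_of_pos hn0 _
  have hupper : (∫ s in (0:ℝ)..(n * δ), Real.sin s / s ^ (α - 1)) ≤ Qπ :=
    Q_le_Qpi hα1 hα2 hnδ.le
  have hlower : min Q2 Qδ ≤ ∫ s in (0:ℝ)..(n * δ), Real.sin s / s ^ (α - 1) := by
    rcases le_or_gt (n * δ) π with hcase | hcase
    · have hδn : δ ≤ n * δ := le_mul_of_one_le_left hδ.le hn
      exact le_trans (min_le_right _ _) (Q_mono hα1 hα2 hδ.le hδn hcase)
    · exact le_trans (min_le_left _ _) (Q_ge_Q2pi hα1 hα2 hcase.le)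
  constructor
  · calc C * min Q2 Qδ * n ^ (α - 2) = C * n ^ (α - 2) * min Q2 Qδ := by ring
      _ ≤ C * n ^ (α - 2) * ∫ s in (0:ℝ)..(n * δ), Real.sin s / s ^ (α - 1) :=
        mul_le_mul_of_nonneg_left hlower (mul_pos hC hN).le
  · calc C * n ^ (α - 2) * (∫ s in (0:ℝ)..(n * δ), Real.sin s / s ^ (α - 1))
        ≤ C * n ^ (α - 2) * Qπ := mul_le_mul_of_nonneg_left hupper (mul_pos hC hN).le
      _ = C * Qπ * n ^ (α - 2) := by ring
end
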